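/- arXiv:1612.09173 — 6 statements merged into one kernel-verified Lean document; each statement's English description precedes it below -/
import Mathlib

section
/- For every positive divisor d of n+1, the ℤ-submodule L(d) of V is invariant under ρ(g) for all g ∈ G; that is, L(d) is a ℤG-lattice in V. -/
open Pointwise

/-- The matrix by which the adjacent transposition `(k k+1)` acts:
`E^{k,k-1} + 2 E^{k,k} + E^{k,k+1} - I_n` (indices `1,…,n` in the paper,
here shifted to `0,…,n-1`; out-of-range `E^{i,j}` are `0`). -/
def craigA (n : ℕ) (k : Fin n) : Matrix (Fin n) (Fin n) ℚ :=
  Matrix.of fun i j =>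
    (if (i : ℕ) = (k : ℕ) ∧ (j : ℕ) + 1 = (k : ℕ) then 1 else 0)
    + (if (i : ℕ) = (k : ℕ) ∧ (j : ℕ) = (k : ℕ) then 2 else 0)
    + (if (i : ℕ) = (k : ℕ) ∧ (j : ℕ) = (k : ℕ) + 1 then 1 else 0)
    - (if i = j then 1 else 0)

/-- `v = e_n + Σ_{i=1}^{n-1} (-1)^{n+1-i} i e_i` (with `e_i` the standard basis,
shifted to `0`-based indexing). -/
def craigV (n : ℕ) : Fin n → ℚ :=
  fun j => if (j : ℕ) = n - 1 then 1 else (-1 : ℚ) ^ (n - (j : ℕ)) * ((j : ℕ) + 1)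

/-- `L(d) = (⊕_{i=1}^{n-1} ℤ·d·e_i) ⊕ ℤ·v` as a `ℤ`-submodule of `ℚ^n`. -/
def craigL (n : ℕ) (d : ℕ) : Submodule ℤ (Fin n → ℚ) :=
  Submodule.span ℤ
    (insert (craigV n) {x | ∃ j : Fin n, (j : ℕ) < n - 1 ∧ x = (d : ℚ) • (Pi.single j 1 : Fin n → ℚ)})

/-- A `ℤ`-submodule is invariant under the action `ρ` of `𝔖_{n+1}`. -/
def Invar {n : ℕ} (ρ : Equiv.Perm (Fin (n + 1)) →* Matrix (Fin n) (Fin n) ℚ)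
    (N : Submodule ℤ (Fin n → ℚ)) : Prop :=
  ∀ g : Equiv.Perm (Fin (n + 1)), ∀ x ∈ N, (ρ g).mulVec x ∈ N

/-- `N` is a `ℤG`-sublattice of `M`. -/
def IsSubl {n : ℕ} (ρ : Equiv.Perm (Fin (n + 1)) →* Matrix (Fin n) (Fin n) ℚ)
    (M N : Submodule ℤ (Fin n → ℚ)) : Prop :=
  N ≤ M ∧ Invar ρ N

/-- The index `|M : N|` of `N` in `M` as additive subgroups (`0` if infinite). -/
noncomputable def subIndex {n : ℕ} (N M : Submodule ℤ (Fin n → ℚ)) : ℕ :=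
  AddSubgroup.relIndex N.toAddSubgroup M.toAddSubgroup

/-- Isomorphism of `ℤG`-lattices: a `ℤ`-linear isomorphism commuting with the
action of every `ρ g`. -/
def IsZGIso {n : ℕ} (ρ : Equiv.Perm (Fin (n + 1)) →* Matrix (Fin n) (Fin n) ℚ)
    (N N' : Submodule ℤ (Fin n → ℚ)) : Prop :=
  ∃ e : N ≃ₗ[ℤ] N',
    ∀ (g : Equiv.Perm (Fin (n + 1))) (x : N)
      (hx : (ρ g).mulVec (x : Fin n → ℚ) ∈ N),
      ((e ⟨(ρ g).mulVec (x : Fin n → ℚ), hx⟩ : N') : Fin n → ℚ)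
        = (ρ g).mulVec ((e x : N') : Fin n → ℚ)

/-- `N` is a `p`-maximal sublattice of `M`: a maximal element of the set of
proper `ℤG`-sublattices of `M` containing `p·M`. -/
def IsPMaximal {n : ℕ} (ρ : Equiv.Perm (Fin (n + 1)) →* Matrix (Fin n) (Fin n) ℚ)
    (p : ℕ) (M N : Submodule ℤ (Fin n → ℚ)) : Prop :=
  (IsSubl ρ M N ∧ N ≠ M ∧ (p : ℚ) • M ≤ N) ∧
    ∀ N' : Submodule ℤ (Fin n → ℚ),
      IsSubl ρ M N' → N' ≠ M → (p : ℚ) • M ≤ N' → N ≤ N' → N' = N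

/-- `rad_p(M)`: the intersection of all `p`-maximal sublattices of `M`. -/
def radP {n : ℕ} (ρ : Equiv.Perm (Fin (n + 1)) →* Matrix (Fin n) (Fin n) ℚ)
    (p : ℕ) (M : Submodule ℤ (Fin n → ℚ)) : Submodule ℤ (Fin n → ℚ) :=
  sInf {N | IsPMaximal ρ p M N}

/-- `Φ_p(M)`: the `ℤG`-sublattices `L` of `M` with `rad_p(M) ⊆ L ⊆ M`. -/
def PhiP {n : ℕ} (ρ : Equiv.Perm (Fin (n + 1)) →* Matrix (Fin n) (Fin n) ℚ)
    (p : ℕ) (M : Submodule ℤ (Fin n → ℚ)) : Set (Submodule ℤ (Fin n → ℚ)) :=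
  {L | IsSubl ρ M L ∧ radP ρ p M ≤ L}

/-- `μ_p(M, L) = Σ_J (-1)^{|J|}` over subsets `J` of `max_p(M)` with
`∩_{N ∈ J} N = L` (the empty intersection being `M`). -/
noncomputable def muP {n : ℕ}
    (ρ : Equiv.Perm (Fin (n + 1)) →* Matrix (Fin n) (Fin n) ℚ)
    (p : ℕ) (M L : Submodule ℤ (Fin n → ℚ)) : ℤ :=
  ∑ᶠ J ∈ {J : Finset (Submodule ℤ (Fin n → ℚ)) |
      (∀ N ∈ J, IsPMaximal ρ p M N) ∧ M ⊓ J.inf id = L},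
    (-1 : ℤ) ^ J.card



section CraigAux

open Finset

/-- Row coefficients of `craigA n k` in row `k`. -/
def ccoef (n : ℕ) (k j : Fin n) : ℚ :=
  (if (j : ℕ) + 1 = (k : ℕ) then 1 else 0)
  + (if (j : ℕ) = (k : ℕ) then 2 else 0)
  + (if (j : ℕ) = (k : ℕ) + 1 then 1 else 0)

lemma craigA_mulVec (n : ℕ) (k : Fin n) (x : Fin n → ℚ) :
    (craigA n k).mulVec x
      = (∑ j : Fin n, ccoef n k j * x j) • (Pi.single k 1 : Fin n → ℚ) - x := by
  funext i
  simp only [Matrix.mulVec, dotProduct, craigA, Matrix.of_apply, Pi.sub_apply,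
    Pi.smul_apply, smul_eq_mul, Pi.single_apply]
  rcases eq_or_ne i k with rfl | hik
  · simp only [if_pos rfl, eq_self_iff_true, true_and, mul_one]
    have h1 : ∀ j : Fin n,
        ((if (j : ℕ) + 1 = (i : ℕ) then (1:ℚ) else 0)
          + (if (j : ℕ) = (i : ℕ) then 2 else 0)
          + (if (j : ℕ) = (i : ℕ) + 1 then 1 else 0)
          - if i = j then 1 else 0) * x j
        = ccoef n i j * x j - (if i = j then x j else 0) := by
      intro j; unfold ccoef; split_ifs <;> ring
    rw [Finset.sum_congr rfl fun j _ => h1 j, Finset.sum_sub_distrib, Finset.sum_ite_eq]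
    simp
  · have h0 : ¬ ((i : ℕ) = (k : ℕ)) := fun h => hik (Fin.ext h)
    simp only [h0, false_and, if_false, zero_add, add_zero, zero_sub, hik, mul_zero]
    have h1 : ∀ j : Fin n, (-if i = j then (1:ℚ) else 0) * x j
        = -(if i = j then x j else 0) := by
      intro j; split_ifs <;> ring
    rw [Finset.sum_congr rfl fun j _ => h1 j, Finset.sum_neg_distrib, Finset.sum_ite_eq]
    simp

lemma sum_ite_val {n : ℕ} (m : ℕ) (f : Fin n → ℚ) :
    (∑ j : Fin n, if (j : ℕ) = m then f j else 0) = if h : m < n then f ⟨m, h⟩ else 0 := by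
  split_ifs with h
  · rw [Finset.sum_eq_single ⟨m, h⟩]
    · simp
    · intro j _ hj; exact if_neg fun hc => hj (Fin.ext hc)
    · simp
  · exact Finset.sum_eq_zero fun j _ => if_neg fun hc => h (by omega)

lemma sum_ite_succ {n : ℕ} (m : ℕ) (f : Fin n → ℚ) :
    (∑ j : Fin n, if (j : ℕ) + 1 = m then f j else 0)
      = if h : m - 1 < n ∧ 1 ≤ m then f ⟨m - 1, h.1⟩ else 0 := by
  split_ifs with h
  · rw [Finset.sum_eq_single ⟨m - 1, h.1⟩]
    · rw [if_pos (by simp only [Fin.val_mk]; omega)]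
    · intro j _ hj; exact if_neg fun hc => hj (Fin.ext (by simp only [Fin.val_mk]; omega))
    · simp
  · refine Finset.sum_eq_zero fun j _ => if_neg fun hc => h ⟨by omega, by omega⟩

lemma craigV_mem (n d : ℕ) : craigV n ∈ craigL n d :=
  Submodule.subset_span (Set.mem_insert _ _)

lemma single_mem_of_lt {n d : ℕ} {j : Fin n} (hj : (j : ℕ) < n - 1) :
    (d : ℚ) • (Pi.single j 1 : Fin n → ℚ) ∈ craigL n d :=
  Submodule.subset_span (Set.mem_insert_iff.2 (Or.inr ⟨j, hj, rfl⟩))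

lemma single_mem {n d : ℕ} (hn : 2 ≤ n) (k : Fin n) :
    (d : ℚ) • (Pi.single k 1 : Fin n → ℚ) ∈ craigL n d := by
  rcases lt_or_ge (k : ℕ) (n - 1) with hk | hk
  · exact single_mem_of_lt hk
  · have hk' : (k : ℕ) = n - 1 := le_antisymm (by omega) hk
    have key : (d : ℚ) • (Pi.single k 1 : Fin n → ℚ)
        = (d : ℤ) • craigV n
          - ∑ j : Fin n, (if (j : ℕ) < n - 1 then ((-1 : ℤ) ^ (n - (j : ℕ)) * ((j : ℕ) + 1)) else 0)
              • ((d : ℚ) • (Pi.single j 1 : Fin n → ℚ)) := by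
      have key2 : ∀ (c : ℤ) (w : Fin n → ℚ), c • w = (c : ℚ) • w :=
        fun c w => (Int.cast_smul_eq_zsmul ℚ c w).symm
      simp only [key2]
      funext i
      simp only [Pi.sub_apply, Pi.smul_apply, Finset.sum_apply, smul_eq_mul, Pi.single_apply]
      rw [Finset.sum_eq_single i (fun j _ hj => by rw [if_neg (show ¬ i = j from fun h => hj h.symm)]; ring)
        (fun h => absurd (Finset.mem_univ i) h), if_pos rfl]
      rcases lt_or_ge (i : ℕ) (n - 1) with hi | hi
      · have hik : i ≠ k := fun h => by rw [h, hk'] at hi; omega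
        rw [if_neg hik, if_pos hi]
        simp only [craigV]
        rw [if_neg (by omega)]
        push_cast
        ring
      · have hi' : (i : ℕ) = n - 1 := le_antisymm (by have := i.isLt; omega) hi
        have hik : i = k := Fin.ext (by omega)
        rw [if_pos hik, if_neg (by omega)]
        simp only [craigV]
        rw [if_pos hi']
        push_cast
        ring
    rw [key]
    refine sub_mem (Submodule.smul_mem _ _ (craigV_mem n d)) (Submodule.sum_mem _ fun j _ => ?_)
    by_cases h : (j : ℕ) < n - 1
    · exact Submodule.smul_mem _ _ (single_mem_of_lt h)
    · rw [if_neg h, zero_smul]; exact zero_mem _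

lemma sum_ccoef_single {n : ℕ} (k j : Fin n) (q : ℚ) :
    (∑ j' : Fin n, ccoef n k j' * (q • (Pi.single j 1 : Fin n → ℚ)) j') = ccoef n k j * q := by
  rw [Finset.sum_eq_single j]
  · simp [Pi.single_apply]
  · intro j' _ hj'; simp [Pi.single_apply, hj']
  · simp

lemma sum_ccoef_v {n : ℕ} (hn : 2 ≤ n) (k : Fin n) :
    (∑ j : Fin n, ccoef n k j * craigV n j)
      = if n - 2 ≤ (k : ℕ) then ((n : ℚ) + 1) else 0 := by
  have expand : ∀ j : Fin n, ccoef n k j * craigV n j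
      = (if (j : ℕ) + 1 = (k : ℕ) then craigV n j else 0)
        + (if (j : ℕ) = (k : ℕ) then 2 * craigV n j else 0)
        + (if (j : ℕ) = (k : ℕ) + 1 then craigV n j else 0) := by
    intro j; unfold ccoef; split_ifs <;> ring
  rw [Finset.sum_congr rfl fun j _ => expand j, Finset.sum_add_distrib, Finset.sum_add_distrib,
    sum_ite_succ, sum_ite_val, sum_ite_val]
  have hkn := k.isLt
  rw [dif_pos hkn]
  rcases Nat.lt_or_ge ((k : ℕ) + 2) n with hlt | hge
  · rw [if_neg (show ¬ (n - 2 ≤ (k : ℕ)) by omega),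
      dif_pos (show (k : ℕ) + 1 < n by omega)]
    rcases Nat.eq_zero_or_pos (k : ℕ) with hk0 | hk1
    · rw [dif_neg (show ¬((k : ℕ) - 1 < n ∧ 1 ≤ (k : ℕ)) by omega)]
      simp only [craigV, Fin.val_mk]
      rw [if_neg (show ¬((k : ℕ) = n - 1) by omega),
        if_neg (show ¬((k : ℕ) + 1 = n - 1) by omega)]
      obtain ⟨m, hm⟩ : ∃ m, n = m + 3 := ⟨n - 3, by omega⟩
      rw [show n - (k : ℕ) = m + 3 by omega, show n - ((k : ℕ) + 1) = m + 2 by omega,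
        show ((k : ℕ) : ℚ) = 0 by rw [hk0]; norm_num]
      push_cast [hk0]
      ring
    · rw [dif_pos (show (k : ℕ) - 1 < n ∧ 1 ≤ (k : ℕ) from ⟨by omega, hk1⟩)]
      simp only [craigV, Fin.val_mk]
      rw [if_neg (show ¬((k : ℕ) - 1 = n - 1) by omega),
        if_neg (show ¬((k : ℕ) = n - 1) by omega),
        if_neg (show ¬((k : ℕ) + 1 = n - 1) by omega)]
      obtain ⟨m, hm⟩ : ∃ m, n - (k : ℕ) = m + 3 := ⟨n - (k : ℕ) - 3, by omega⟩
      rw [show n - ((k : ℕ) - 1) = m + 4 by omega, show n - (k : ℕ) = m + 3 by omega,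
        show n - ((k : ℕ) + 1) = m + 2 by omega,
        show ((((k : ℕ) - 1 : ℕ)) : ℚ) = ((k : ℕ) : ℚ) - 1 by push_cast [Nat.cast_sub hk1]; ring]
      push_cast
      ring
  · rw [if_pos (show n - 2 ≤ (k : ℕ) by omega)]
    rcases Nat.lt_or_ge ((k : ℕ) + 1) n with h1 | h2
    · rw [dif_pos h1]
      rcases Nat.eq_zero_or_pos (k : ℕ) with hk0 | hk1
      · rw [dif_neg (show ¬((k : ℕ) - 1 < n ∧ 1 ≤ (k : ℕ)) by omega)]
        simp only [craigV, Fin.val_mk]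
        rw [if_neg (show ¬((k : ℕ) = n - 1) by omega),
          if_pos (show (k : ℕ) + 1 = n - 1 by omega)]
        rw [show n - (k : ℕ) = 2 by omega,
          show ((k : ℕ) : ℚ) = 0 by rw [hk0]; norm_num,
          show ((n : ℕ) : ℚ) = 2 by rw [show n = 2 by omega]; norm_num]
        norm_num
      · rw [dif_pos (show (k : ℕ) - 1 < n ∧ 1 ≤ (k : ℕ) from ⟨by omega, hk1⟩)]
        simp only [craigV, Fin.val_mk]
        rw [if_neg (show ¬((k : ℕ) - 1 = n - 1) by omega),
          if_neg (show ¬((k : ℕ) = n - 1) by omega),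
          if_pos (show (k : ℕ) + 1 = n - 1 by omega)]
        rw [show n - ((k : ℕ) - 1) = 3 by omega, show n - (k : ℕ) = 2 by omega,
          show ((((k : ℕ) - 1 : ℕ)) : ℚ) = ((k : ℕ) : ℚ) - 1 by push_cast [Nat.cast_sub hk1]; ring,
          show ((k : ℕ) : ℚ) = (n : ℚ) - 2 by
            rw [show (k : ℕ) = n - 2 by omega]; push_cast [Nat.cast_sub (show 2 ≤ n from hn)]; ring]
        ring
    · have hkpos : 1 ≤ (k : ℕ) := by omega
      rw [dif_neg (show ¬((k : ℕ) + 1 < n) by omega),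
        dif_pos (show (k : ℕ) - 1 < n ∧ 1 ≤ (k : ℕ) from ⟨by omega, hkpos⟩)]
      simp only [craigV, Fin.val_mk]
      rw [if_neg (show ¬((k : ℕ) - 1 = n - 1) by omega),
        if_pos (show (k : ℕ) = n - 1 by omega)]
      rw [show n - ((k : ℕ) - 1) = 2 by omega,
        show ((((k : ℕ) - 1 : ℕ)) : ℚ) = ((k : ℕ) : ℚ) - 1 by push_cast [Nat.cast_sub hkpos]; ring,
        show ((k : ℕ) : ℚ) = (n : ℚ) - 1 by
          rw [show (k : ℕ) = n - 1 by omega]; push_cast [Nat.cast_sub (show 1 ≤ n by omega)]; ring]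
      ring

lemma craigA_step {n d : ℕ} (hn : 2 ≤ n) (hdvd : d ∣ n + 1) (k : Fin n) (x : Fin n → ℚ)
    (hx : x ∈ craigL n d) : (craigA n k).mulVec x ∈ craigL n d := by
  induction hx using Submodule.span_induction with
  | mem w hw =>
    rcases hw with rfl | ⟨j, hj, rfl⟩
    · rw [craigA_mulVec, sum_ccoef_v hn]
      by_cases hk : n - 2 ≤ (k : ℕ)
      · rw [if_pos hk]
        obtain ⟨m, hm⟩ := hdvd
        have hrw : ((n : ℚ) + 1) • (Pi.single k 1 : Fin n → ℚ)
            = (m : ℤ) • ((d : ℚ) • (Pi.single k 1 : Fin n → ℚ)) := by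
          rw [← Int.cast_smul_eq_zsmul ℚ, smul_smul]
          congr 1
          push_cast
          have : ((n : ℚ) + 1) = ((n + 1 : ℕ) : ℚ) := by push_cast; ring
          rw [this, hm]; push_cast; ring
        rw [hrw]
        exact sub_mem (Submodule.smul_mem _ _ (single_mem hn k)) (craigV_mem n d)
      · rw [if_neg hk, zero_smul, zero_sub]
        exact neg_mem (craigV_mem n d)
    · rw [craigA_mulVec, sum_ccoef_single]
      by_cases h2 : j = k
      · subst h2
        have hc : ccoef n j j = 2 := by
          unfold ccoef; rw [if_neg (by omega), if_pos rfl, if_neg (by omega)]; norm_num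
        rw [hc]
        have : ((2 : ℚ) * d) • (Pi.single j 1 : Fin n → ℚ)
            - (d : ℚ) • (Pi.single j 1 : Fin n → ℚ) = (d : ℚ) • (Pi.single j 1 : Fin n → ℚ) := by
          module
        rw [this]
        exact single_mem_of_lt hj
      · have h2' : ¬((j : ℕ) = (k : ℕ)) := fun h => h2 (Fin.ext h)
        by_cases h3 : (j : ℕ) + 1 = (k : ℕ)
        · have hc : ccoef n k j = 1 := by
            unfold ccoef; rw [if_pos h3, if_neg h2', if_neg (by omega)]; norm_num
          rw [hc, one_mul]
          exact sub_mem (single_mem hn k) (single_mem_of_lt hj)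
        · by_cases h4 : (j : ℕ) = (k : ℕ) + 1
          · have hc : ccoef n k j = 1 := by
              unfold ccoef; rw [if_neg h3, if_neg h2', if_pos h4]; norm_num
            rw [hc, one_mul]
            exact sub_mem (single_mem hn k) (single_mem_of_lt hj)
          · have hc : ccoef n k j = 0 := by
              unfold ccoef; rw [if_neg h3, if_neg h2', if_neg h4]; norm_num
            rw [hc, zero_mul, zero_smul, zero_sub]
            exact neg_mem (single_mem_of_lt hj)
  | zero => rw [Matrix.mulVec_zero]; exact zero_mem _
  | add a b _ _ ha hb => rw [Matrix.mulVec_add]; exact add_mem ha hb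
  | smul c a _ ha =>
    rw [← Int.cast_smul_eq_zsmul ℚ, Matrix.mulVec_smul, Int.cast_smul_eq_zsmul]
    exact Submodule.smul_mem _ _ ha

end CraigAux

/-- For every positive divisor `d` of `n+1`, `L(d)` is a
`ℤG`-lattice in `V = ℚ^n`: it is a finitely generated `ℤ`-submodule with
`ℚ·L(d) = V` which is invariant under `ρ(g)` for all `g ∈ G`. -/
theorem craig_L_is_lattice (n : ℕ) (hn : 2 ≤ n)
    (ρ : Equiv.Perm (Fin (n + 1)) →* Matrix (Fin n) (Fin n) ℚ)
    (hρ : ∀ k : Fin n, ρ (Equiv.swap k.castSucc k.succ) = craigA n k)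
    (d : ℕ) (hd : 0 < d) (hdvd : d ∣ n + 1) :
    (craigL n d).FG ∧
      Submodule.span ℚ ((craigL n d : Set (Fin n → ℚ))) = ⊤ ∧
      Invar ρ (craigL n d) := by
  refine ⟨?_, ?_, ?_⟩
  · apply Submodule.fg_span
    apply Set.Finite.insert
    apply Set.Finite.subset
      (Set.finite_range fun j : Fin n => (d : ℚ) • (Pi.single j 1 : Fin n → ℚ))
    rintro x ⟨j, hj, rfl⟩
    exact ⟨j, rfl⟩
  · rw [eq_top_iff]
    rintro x -
    have hone : ∀ k : Fin n,
        (Pi.single k 1 : Fin n → ℚ) ∈ Submodule.span ℚ ((craigL n d : Set (Fin n → ℚ))) := by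
      intro k
      have h1 : (d : ℚ) • (Pi.single k 1 : Fin n → ℚ)
          ∈ Submodule.span ℚ ((craigL n d : Set (Fin n → ℚ))) :=
        Submodule.subset_span (single_mem hn k)
      have h2 := Submodule.smul_mem _ ((d : ℚ)⁻¹) h1
      rwa [smul_smul, inv_mul_cancel₀ (by exact_mod_cast hd.ne'), one_smul] at h2
    rw [pi_eq_sum_univ x]
    refine Submodule.sum_mem _ fun i _ => Submodule.smul_mem _ _ ?_
    have hfun : (fun j => if i = j then (1 : ℚ) else 0) = Pi.single i 1 := by
      funext j; rw [Pi.single_apply]; simp [eq_comm]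
    rw [hfun]
    exact hone i
  · intro g
    have hg : g ∈ Submonoid.closure (Set.range fun i : Fin n => Equiv.swap i.castSucc i.succ) := by
      rw [Equiv.Perm.mclosure_swap_castSucc_succ]; trivial
    induction hg using Submonoid.closure_induction with
    | mem g hgmem =>
      obtain ⟨k, rfl⟩ := hgmem
      intro x hx
      rw [hρ k]
      exact craigA_step hn hdvd k x hx
    | one =>
      intro x hx
      rw [map_one, Matrix.one_mulVec]
      exact hx
    | mul a b ha hb iha ihb =>
      intro x hx
      rw [map_mul, ← Matrix.mulVec_mulVec]
      exact iha _ (ihb x hx)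
end

section
/- Every ℤG-lattice in V (i.e., every finitely generated ℤ-submodule M of V with ℚ·M = V and ρ(g)M ⊆ M for all g ∈ G) is isomorphic as a ℤG-lattice to L(d) for some positive divisor d of n+1. -/
open Pointwise

namespace CraigAux

variable {n : ℕ}

/-- zero extension of a vector to integer indices -/
def xZ (x : Fin n → ℚ) (m : ℤ) : ℚ :=
  if h : 0 ≤ m ∧ m < (n : ℤ) then x ⟨m.toNat, by omega⟩ else 0

lemma xZ_coe (x : Fin n → ℚ) (j : Fin n) : xZ x ((j : ℕ) : ℤ) = x j := by
  have h : (0 : ℤ) ≤ (j : ℕ) ∧ ((j : ℕ) : ℤ) < (n : ℤ) :=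
    ⟨Int.natCast_nonneg _, by exact_mod_cast j.isLt⟩
  rw [xZ, dif_pos h]
  congr 1

lemma xZ_of_not (x : Fin n → ℚ) (m : ℤ) (h : ¬(0 ≤ m ∧ m < (n : ℤ))) : xZ x m = 0 := by
  rw [xZ, dif_neg h]

lemma xZ_add (x y : Fin n → ℚ) (m : ℤ) : xZ (x + y) m = xZ x m + xZ y m := by
  unfold xZ; split <;> simp

lemma xZ_smul (a : ℚ) (x : Fin n → ℚ) (m : ℤ) : xZ (a • x) m = a * xZ x m := by
  unfold xZ; split <;> simp

lemma xZ_zsmul (a : ℤ) (x : Fin n → ℚ) (m : ℤ) : xZ (a • x) m = (a : ℚ) * xZ x m := by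
  unfold xZ; split <;> simp

lemma xZ_single (a : Fin n) (b : ℚ) (m : ℤ) :
    xZ (Pi.single a b) m = if m = ((a : ℕ) : ℤ) then b else 0 := by
  by_cases h : 0 ≤ m ∧ m < (n : ℤ)
  · rw [xZ, dif_pos h, Pi.single_apply]
    have : ((⟨m.toNat, by omega⟩ : Fin n) = a) ↔ (m = ((a:ℕ):ℤ)) := by
      rw [Fin.ext_iff]
      simp only []
      omega
    rw [if_congr this rfl rfl]
  · rw [xZ, dif_neg h, if_neg (by have := a.isLt; omega)]

lemma eq_of_xZ (u v : Fin n → ℚ) (h : ∀ m : ℤ, xZ u m = xZ v m) : u = v := by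
  funext i
  have := h ((i : ℕ) : ℤ)
  rwa [xZ_coe, xZ_coe] at this

/-- the transformed coordinates `y_i = (-1)^i (x_i + x_{i-1})` -/
def Yc (x : Fin n → ℚ) (i : ℕ) : ℚ :=
  (-1 : ℚ) ^ i * (xZ x (i : ℤ) + xZ x ((i : ℤ) - 1))

lemma Yc_add (x y : Fin n → ℚ) (i : ℕ) : Yc (x + y) i = Yc x i + Yc y i := by
  unfold Yc; rw [xZ_add, xZ_add]; ring

lemma Yc_smul (a : ℚ) (x : Fin n → ℚ) (i : ℕ) : Yc (a • x) i = a * Yc x i := by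
  unfold Yc; rw [xZ_smul, xZ_smul]; ring

lemma Yc_zsmul (a : ℤ) (x : Fin n → ℚ) (i : ℕ) : Yc (a • x) i = (a : ℚ) * Yc x i := by
  unfold Yc; rw [xZ_zsmul, xZ_zsmul]; ring

lemma sum_if_eq (x : Fin n → ℚ) (m : ℤ) :
    (∑ j : Fin n, if ((j : ℕ) : ℤ) = m then x j else 0) = xZ x m := by
  by_cases h : 0 ≤ m ∧ m < (n : ℤ)
  · have hlt : m.toNat < n := by omega
    rw [Finset.sum_eq_single (⟨m.toNat, hlt⟩ : Fin n)]
    · rw [if_pos (by simp; omega), xZ, dif_pos h]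
    · intro j _ hj
      rw [if_neg]
      intro hc
      apply hj
      apply Fin.ext
      simp only []
      omega
    · intro hmem; exact absurd (Finset.mem_univ _) hmem
  · rw [xZ_of_not x m h]
    apply Finset.sum_eq_zero
    intro j _
    rw [if_neg]
    have := j.isLt
    omega

lemma craigA_mulVec (k : Fin n) (x : Fin n → ℚ) (i : Fin n) :
    (craigA n k).mulVec x i =
      (if (i : ℕ) = (k : ℕ) then
        xZ x ((k : ℕ) - 1) + 2 * xZ x ((k : ℕ) : ℤ) + xZ x ((k : ℕ) + 1) else 0) - x i := by
  unfold Matrix.mulVec dotProduct craigA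
  simp only [Matrix.of_apply]
  by_cases hik : (i : ℕ) = (k : ℕ)
  · simp only [hik, true_and, if_pos rfl]
    have expand : ∀ j : Fin n,
        ((if (j : ℕ) + 1 = (k : ℕ) then (1:ℚ) else 0)
          + (if (j : ℕ) = (k : ℕ) then 2 else 0)
          + (if (j : ℕ) = (k : ℕ) + 1 then 1 else 0)
          - (if i = j then 1 else 0)) * x j
        = (if ((j : ℕ) : ℤ) = ((k : ℕ) : ℤ) - 1 then x j else 0)
          + 2 * (if ((j : ℕ) : ℤ) = ((k : ℕ) : ℤ) then x j else 0)
          + (if ((j : ℕ) : ℤ) = ((k : ℕ) : ℤ) + 1 then x j else 0)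
          - (if i = j then x j else 0) := by
      intro j
      have h1 : ((j : ℕ) + 1 = (k : ℕ)) ↔ (((j : ℕ) : ℤ) = ((k : ℕ) : ℤ) - 1) := by omega
      have h2 : ((j : ℕ) = (k : ℕ)) ↔ (((j : ℕ) : ℤ) = ((k : ℕ) : ℤ)) := by omega
      have h3 : ((j : ℕ) = (k : ℕ) + 1) ↔ (((j : ℕ) : ℤ) = ((k : ℕ) : ℤ) + 1) := by omega
      rw [if_congr h1 rfl rfl, if_congr h2 rfl rfl, if_congr h3 rfl rfl]
      split_ifs <;> first | ring1 | (exfalso; omega)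
    rw [Finset.sum_congr rfl (fun j _ => expand j)]
    rw [Finset.sum_sub_distrib, Finset.sum_add_distrib, Finset.sum_add_distrib,
      ← Finset.mul_sum, sum_if_eq, sum_if_eq, sum_if_eq, Finset.sum_ite_eq,
      if_pos (Finset.mem_univ i)]
    push_cast
    ring
  · simp only [hik, false_and, if_false]
    have expand : ∀ j : Fin n,
        ((0:ℚ) + 0 + 0 - (if i = j then 1 else 0)) * x j = - (if i = j then x j else 0) := by
      intro j
      by_cases c4 : i = j <;> simp [c4]
    rw [Finset.sum_congr rfl (fun j _ => expand j), Finset.sum_neg_distrib,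
      Finset.sum_ite_eq, if_pos (Finset.mem_univ i)]
    ring

lemma xZ_craigA (k : Fin n) (x : Fin n → ℚ) (m : ℤ) :
    xZ ((craigA n k).mulVec x) m =
      (if m = ((k : ℕ) : ℤ) then
        xZ x ((k : ℕ) - 1) + 2 * xZ x ((k : ℕ) : ℤ) + xZ x ((k : ℕ) + 1) else 0) - xZ x m := by
  by_cases h : 0 ≤ m ∧ m < (n : ℤ)
  · have hlt : m.toNat < n := by omega
    rw [show xZ ((craigA n k).mulVec x) m = ((craigA n k).mulVec x) ⟨m.toNat, hlt⟩ by
      rw [xZ, dif_pos h]]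
    rw [show xZ x m = x ⟨m.toNat, hlt⟩ by rw [xZ, dif_pos h]]
    rw [craigA_mulVec]
    have hc : ((⟨m.toNat, hlt⟩ : Fin n) : ℕ) = (k : ℕ) ↔ m = ((k : ℕ) : ℤ) := by
      simp only []
      omega
    rw [if_congr hc rfl rfl]
  · rw [xZ_of_not _ m h, xZ_of_not x m h, if_neg (by have := k.isLt; omega)]
    ring

/-- the key equivariance of `Yc` under the generator matrices -/
lemma Yc_craigA (k : Fin n) (x : Fin n → ℚ) (i : ℕ) :
    Yc ((craigA n k).mulVec x) i =
      - Yc x (if i = (k : ℕ) then (k : ℕ) + 1 else if i = (k : ℕ) + 1 then (k : ℕ) else i) := by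
  unfold Yc
  rw [xZ_craigA, xZ_craigA]
  by_cases h1 : i = (k : ℕ)
  · rw [if_pos h1, h1]
    rw [if_pos rfl, if_neg (by omega)]
    push_cast [pow_succ]
    ring
  · rw [if_neg h1]
    by_cases h2 : i = (k : ℕ) + 1
    · rw [if_pos h2, h2]
      rw [if_neg (by omega), if_pos (by push_cast; ring)]
      push_cast [pow_succ]
      ring
    · rw [if_neg h2, if_neg (by omega), if_neg (by omega)]
      ring

/-- partial sums of the `Yc` telescope back to the coordinates -/
lemma sum_Yc (x : Fin n → ℚ) (j : ℕ) :
    (∑ i ∈ Finset.range (j + 1), Yc x i) = (-1 : ℚ) ^ j * xZ x (j : ℤ) := by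
  induction j with
  | zero =>
    rw [Finset.sum_range_one]
    unfold Yc
    rw [show ((0:ℕ):ℤ) - 1 = (-1 : ℤ) by norm_num, xZ_of_not _ (-1 : ℤ) (by omega)]
    norm_num
  | succ j ih =>
    rw [Finset.sum_range_succ, ih, Yc]
    have e2 : (((j + 1 : ℕ)) : ℤ) - 1 = (j : ℤ) := by push_cast; ring
    rw [e2, pow_succ]
    ring

lemma neg_one_pow_par (a b : ℕ) (h : a % 2 = b % 2) : (-1:ℚ)^a = (-1:ℚ)^b := by
  conv_lhs => rw [← Nat.div_add_mod a 2]
  conv_rhs => rw [← Nat.div_add_mod b 2]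
  rw [pow_add, pow_add, pow_mul, pow_mul]
  norm_num [h]

lemma rat_mul_den (x : ℚ) : x * (x.den : ℚ) = (x.num : ℚ) := by
  have hd : (x.den : ℚ) ≠ 0 := Nat.cast_ne_zero.mpr x.den_nz
  have h := Rat.num_div_den x
  rw [div_eq_iff hd] at h
  exact h.symm

lemma span_pair_cyclic (a b : ℚ) :
    ∃ c : ℚ, Submodule.span ℤ {a, b} = Submodule.span ℤ {c} := by
  have hadQ : ((a.den : ℤ) : ℚ) ≠ 0 := by
    push_cast
    exact Nat.cast_ne_zero.mpr a.den_nz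
  have hbdQ : ((b.den : ℤ) : ℚ) ≠ 0 := by
    push_cast
    exact Nat.cast_ne_zero.mpr b.den_nz
  set m : ℤ := (a.den : ℤ) * (b.den : ℤ) with hm
  have hmQ : ((m : ℤ) : ℚ) ≠ 0 := by
    push_cast [hm] at hadQ hbdQ ⊢
    exact mul_ne_zero hadQ hbdQ
  set p : ℤ := a.num * (b.den : ℤ) with hp
  set q : ℤ := b.num * (a.den : ℤ) with hq
  have hap : a = (p : ℚ) / (m : ℚ) := by
    rw [eq_div_iff hmQ]
    push_cast [hp, hm]
    rw [← mul_assoc, rat_mul_den]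
  have hbq : b = (q : ℚ) / (m : ℚ) := by
    rw [eq_div_iff hmQ]
    push_cast [hq, hm]
    rw [show (a.den : ℚ) * (b.den : ℚ) = (b.den : ℚ) * (a.den : ℚ) by ring, ← mul_assoc,
      rat_mul_den]
  set g : ℤ := (Int.gcd p q : ℤ) with hg
  refine ⟨(g : ℚ) / (m : ℚ), le_antisymm ?_ ?_⟩
  · rw [Submodule.span_le]
    rintro y (rfl | rfl)
    · obtain ⟨p', hp'⟩ : g ∣ p := Int.gcd_dvd_left p q
      rw [SetLike.mem_coe, Submodule.mem_span_singleton]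
      refine ⟨p', ?_⟩
      rw [hap, hp', zsmul_eq_mul]
      push_cast
      ring
    · obtain ⟨q', hq'⟩ : g ∣ q := Int.gcd_dvd_right p q
      rw [SetLike.mem_coe, Submodule.mem_span_singleton]
      refine ⟨q', ?_⟩
      rw [hbq, hq', zsmul_eq_mul]
      push_cast
      ring
  · rw [Submodule.span_le, Set.singleton_subset_iff, SetLike.mem_coe,
      Submodule.mem_span_pair]
    refine ⟨Int.gcdA p q, Int.gcdB p q, ?_⟩
    rw [hap, hbq]
    have hbez : g = p * Int.gcdA p q + q * Int.gcdB p q := Int.gcd_eq_gcd_ab p q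
    have hbezQ : ((Int.gcdA p q : ℚ) * (p : ℚ) + (Int.gcdB p q : ℚ) * (q : ℚ)) = (g : ℚ) := by
      exact_mod_cast congrArg (fun z : ℤ => (z : ℚ))
        (by linear_combination -hbez : Int.gcdA p q * p + Int.gcdB p q * q = g)
    rw [zsmul_eq_mul, zsmul_eq_mul, mul_div_assoc', mul_div_assoc', ← add_div, hbezQ]

lemma finset_span_cyclic (s : Finset ℚ) :
    ∃ c : ℚ, Submodule.span ℤ (s : Set ℚ) = Submodule.span ℤ {c} := by
  classical
  induction s using Finset.induction_on with
  | empty => exact ⟨0, by simp⟩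
  | @insert a s ha ih =>
    obtain ⟨c0, hc0⟩ := ih
    obtain ⟨c, hc⟩ := span_pair_cyclic a c0
    refine ⟨c, ?_⟩
    rw [Finset.coe_insert, Submodule.span_insert, hc0, ← Submodule.span_insert, ← hc]

end CraigAux

/-- Every `ℤG`-lattice in `V` is isomorphic as a `ℤG`-lattice to
`L(d)` for some positive divisor `d` of `n+1`. -/
theorem craig_classification (n : ℕ) (hn : 2 ≤ n)
    (ρ : Equiv.Perm (Fin (n + 1)) →* Matrix (Fin n) (Fin n) ℚ)
    (hρ : ∀ k : Fin n, ρ (Equiv.swap k.castSucc k.succ) = craigA n k)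
    (M : Submodule ℤ (Fin n → ℚ)) (hfg : M.FG)
    (hspan : Submodule.span ℚ ((M : Set (Fin n → ℚ))) = ⊤)
    (hinv : Invar ρ M) :
    ∃ d : ℕ, 0 < d ∧ d ∣ n + 1 ∧ IsZGIso ρ M (craigL n d) := by
  classical
  obtain ⟨d, hd0, hdvd, μ, hμ0, h1, h2⟩ :
      ∃ d : ℕ, 0 < d ∧ d ∣ n + 1 ∧ ∃ μ : ℚ, μ ≠ 0 ∧
        (∀ x ∈ M, μ • x ∈ craigL n d) ∧ (∀ y ∈ craigL n d, μ⁻¹ • y ∈ M) := by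
    -- invariance under the generator matrices
    have hA : ∀ (k : Fin n), ∀ x ∈ M, (craigA n k).mulVec x ∈ M := by
      intro k x hx
      have := hinv (Equiv.swap k.castSucc k.succ) x hx
      rwa [hρ k] at this
    -- the functional φ(x) = y₀ - y₁
    let φ : (Fin n → ℚ) →ₗ[ℤ] ℚ :=
      { toFun := fun x => CraigAux.Yc x 0 - CraigAux.Yc x 1
        map_add' := fun x y => by
          rw [CraigAux.Yc_add, CraigAux.Yc_add]
          ring
        map_smul' := fun a x => by
          rw [CraigAux.Yc_zsmul, CraigAux.Yc_zsmul, RingHom.id_apply, zsmul_eq_mul]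
          ring }
    have hφ : ∀ x, φ x = CraigAux.Yc x 0 - CraigAux.Yc x 1 := fun x => rfl
    obtain ⟨sJ, hsJ⟩ := hfg.map φ
    obtain ⟨c, hc⟩ := CraigAux.finset_span_cyclic sJ
    have hJc : M.map φ = Submodule.span ℤ {c} := by rw [← hsJ, hc]
    -- c ≠ 0
    have hc0 : c ≠ 0 := by
      intro h0
      have hker : ∀ x ∈ M, CraigAux.Yc x 0 - CraigAux.Yc x 1 = 0 := by
        intro x hx
        have hm : φ x ∈ M.map φ := Submodule.mem_map_of_mem hx
        rw [hJc, h0, Submodule.span_zero_singleton, Submodule.mem_bot] at hm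
        rw [← hφ x, hm]
      let φQ : (Fin n → ℚ) →ₗ[ℚ] ℚ :=
        { toFun := fun x => CraigAux.Yc x 0 - CraigAux.Yc x 1
          map_add' := fun x y => by
            rw [CraigAux.Yc_add, CraigAux.Yc_add]
            ring
          map_smul' := fun a x => by
            rw [CraigAux.Yc_smul, CraigAux.Yc_smul, RingHom.id_apply, smul_eq_mul]
            ring }
      have hle : Submodule.span ℚ (M : Set (Fin n → ℚ)) ≤ LinearMap.ker φQ := by
        rw [Submodule.span_le]
        intro x hx
        rw [SetLike.mem_coe, LinearMap.mem_ker]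
        exact hker x hx
      have h0n : (0:ℕ) < n := by omega
      have h1n : (1:ℕ) < n := by omega
      have hev : φQ (Pi.single (⟨0, h0n⟩ : Fin n) 1) = 2 := by
        show CraigAux.Yc (Pi.single (⟨0, h0n⟩ : Fin n) (1:ℚ)) 0
          - CraigAux.Yc (Pi.single (⟨0, h0n⟩ : Fin n) (1:ℚ)) 1 = 2
        unfold CraigAux.Yc
        rw [CraigAux.xZ_single, CraigAux.xZ_single, CraigAux.xZ_single, CraigAux.xZ_single]
        norm_num
      have hker2 : φQ (Pi.single (⟨0, h0n⟩ : Fin n) 1) = 0 := by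
        have hmem : (Pi.single (⟨0, h0n⟩ : Fin n) (1:ℚ)) ∈ Submodule.span ℚ (M : Set (Fin n → ℚ)) := by
          rw [hspan]; trivial
        exact LinearMap.mem_ker.mp (hle hmem)
      rw [hev] at hker2
      norm_num at hker2
    -- all differences y₀ - yᵢ lie in ℤc
    have hF3 : ∀ i : ℕ, i ≤ n → ∀ x ∈ M,
        ∃ a : ℤ, (a : ℚ) * c = CraigAux.Yc x 0 - CraigAux.Yc x i := by
      intro i
      induction i with
      | zero => exact fun _ x _ => ⟨0, by norm_num⟩
      | succ i ih =>
        intro hin x hx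
        rcases Nat.eq_zero_or_pos i with h0 | hpos
        · subst h0
          have hm : φ x ∈ M.map φ := Submodule.mem_map_of_mem hx
          rw [hJc, Submodule.mem_span_singleton] at hm
          obtain ⟨a, ha⟩ := hm
          refine ⟨a, ?_⟩
          rw [← hφ x, ← ha, zsmul_eq_mul]
        · have hiltn : i < n := by omega
          have hx' := hA ⟨i, hiltn⟩ x hx
          obtain ⟨a, ha⟩ := ih (by omega) _ hx'
          refine ⟨-a, ?_⟩
          have h0' := CraigAux.Yc_craigA ⟨i, hiltn⟩ x 0
          have hi' := CraigAux.Yc_craigA ⟨i, hiltn⟩ x i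
          simp only [Fin.val_mk] at h0' hi'
          rw [if_neg (by omega), if_neg (by omega)] at h0'
          simp only [if_true] at hi'
          rw [h0', hi'] at ha
          push_cast
          linarith [ha]
    -- the scaled basis vectors lie in M
    have hsingle : ∀ j : ℕ, ∀ hj : j < n, c • (Pi.single (⟨j, hj⟩ : Fin n) (1:ℚ) : Fin n → ℚ) ∈ M := by
      intro j
      induction j with
      | zero =>
        intro hj
        have hcJ : c ∈ M.map φ := by
          rw [hJc]; exact Submodule.mem_span_singleton_self c
        obtain ⟨x0, hx0M, hx0⟩ := hcJ
        have key : x0 + (craigA n ⟨0, hj⟩).mulVec x0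
            = c • (Pi.single (⟨0, hj⟩ : Fin n) (1:ℚ) : Fin n → ℚ) := by
          apply CraigAux.eq_of_xZ
          intro m
          rw [CraigAux.xZ_add, CraigAux.xZ_craigA, CraigAux.xZ_smul, CraigAux.xZ_single]
          rw [← hx0, hφ x0]
          unfold CraigAux.Yc
          simp only [Fin.val_mk]
          push_cast
          split_ifs <;> first | ring1 | (exfalso; omega)
        rw [← key]
        exact M.add_mem hx0M (hA _ _ hx0M)
      | succ j ihj =>
        intro hj
        have hjn : j < n := by omega
        have hprev := ihj hjn
        have key : (craigA n ⟨j+1, hj⟩).mulVec (c • (Pi.single (⟨j, hjn⟩ : Fin n) (1:ℚ) : Fin n → ℚ))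
              + c • (Pi.single (⟨j, hjn⟩ : Fin n) (1:ℚ) : Fin n → ℚ)
            = c • (Pi.single (⟨j+1, hj⟩ : Fin n) (1:ℚ) : Fin n → ℚ) := by
          apply CraigAux.eq_of_xZ
          intro m
          rw [CraigAux.xZ_add, CraigAux.xZ_craigA]
          simp only [CraigAux.xZ_smul, CraigAux.xZ_single, Fin.val_mk]
          push_cast
          split_ifs <;> first | ring1 | (exfalso; omega)
        rw [← key]
        exact M.add_mem (hA _ _ hprev) hprev
    -- choice of difference integers
    have hzx : ∀ x ∈ M, ∃ z : ℕ → ℤ, ∀ i, i ≤ n →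
        (z i : ℚ) * c = CraigAux.Yc x 0 - CraigAux.Yc x i := by
      intro x hx
      choose z hz using fun i : ℕ => hF3 (min i n) (min_le_right _ _) x hx
      refine ⟨z, fun i hi => ?_⟩
      have := hz i
      rwa [min_eq_left hi] at this
    -- the functional ψ(x) = (n+1)y₀
    let ψ : (Fin n → ℚ) →ₗ[ℤ] ℚ :=
      { toFun := fun x => ((n:ℚ)+1) * CraigAux.Yc x 0
        map_add' := fun x y => by
          rw [CraigAux.Yc_add]
          ring
        map_smul' := fun a x => by
          rw [CraigAux.Yc_zsmul, RingHom.id_apply, zsmul_eq_mul]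
          ring }
    have hψ : ∀ x, ψ x = ((n:ℚ)+1) * CraigAux.Yc x 0 := fun x => rfl
    have hψspan : ∀ x ∈ M, ∃ a : ℤ, (a:ℚ) * c = ((n:ℚ)+1) * CraigAux.Yc x 0 := by
      intro x hx
      obtain ⟨z, hz⟩ := hzx x hx
      refine ⟨∑ i ∈ Finset.range (n+1), z i, ?_⟩
      have hsum : ((n:ℚ)+1) * CraigAux.Yc x 0
          = ∑ i ∈ Finset.range (n+1), (CraigAux.Yc x 0 - CraigAux.Yc x i) := by
        rw [Finset.sum_sub_distrib, Finset.sum_const, Finset.card_range, CraigAux.sum_Yc,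
          CraigAux.xZ_of_not _ _ (by omega)]
        push_cast
        ring
      rw [hsum, ← Finset.sum_congr rfl
        (fun i hi => hz i (by simpa using Nat.lt_succ_iff.mp (Finset.mem_range.mp hi)))]
      push_cast
      rw [Finset.sum_mul]
    -- the ideal K
    let K : Ideal ℤ := Submodule.comap (LinearMap.toSpanSingleton ℤ ℚ c) (M.map ψ)
    obtain ⟨e0, he0⟩ := (IsPrincipalIdealRing.principal K).principal
    have h0n : (0:ℕ) < n := by omega
    have hYsing : CraigAux.Yc (c • (Pi.single (⟨0, h0n⟩ : Fin n) (1:ℚ) : Fin n → ℚ)) 0 = c := by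
      unfold CraigAux.Yc
      rw [CraigAux.xZ_smul, CraigAux.xZ_smul, CraigAux.xZ_single, CraigAux.xZ_single]
      norm_num
    have hn1K : ((n:ℤ)+1) ∈ K := by
      show (LinearMap.toSpanSingleton ℤ ℚ c) ((n:ℤ)+1) ∈ M.map ψ
      rw [LinearMap.toSpanSingleton_apply]
      refine ⟨c • (Pi.single (⟨0, h0n⟩ : Fin n) (1:ℚ) : Fin n → ℚ), hsingle 0 h0n, ?_⟩
      rw [hψ, hYsing, zsmul_eq_mul]
      push_cast
      ring
    set e : ℕ := e0.natAbs with he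
    have hn1e0 : e0 ∣ ((n:ℤ)+1) := by
      rw [he0, Submodule.mem_span_singleton] at hn1K
      obtain ⟨b, hb⟩ := hn1K
      exact ⟨b, by rw [← hb, smul_eq_mul]; ring⟩
    have hedvd : e ∣ (n+1) := by
      have h2 := Int.natAbs_dvd_natAbs.mpr hn1e0
      rwa [show ((n:ℤ)+1).natAbs = n+1 by
        rw [show ((n:ℤ)+1) = ((n+1:ℕ):ℤ) by push_cast; ring, Int.natAbs_natCast]] at h2
    have hene : e ≠ 0 := by
      intro h
      rw [Int.natAbs_eq_zero] at h
      rw [h] at hn1e0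
      have := zero_dvd_iff.mp hn1e0
      omega
    set d : ℕ := (n+1)/e with hd
    have hde : d * e = n+1 := Nat.div_mul_cancel hedvd
    have hd0 : 0 < d := by
      rcases Nat.eq_zero_or_pos d with h | h
      · rw [h] at hde; omega
      · exact h
    have hddvd : d ∣ (n+1) := ⟨e, hde.symm⟩
    have hdeQ : (d:ℚ) * (e:ℚ) = (n:ℚ)+1 := by exact_mod_cast congrArg (fun t : ℕ => (t:ℚ)) hde
    -- xhat with ψ xhat = e·c
    have hxhat : ∃ xh ∈ M, ((n:ℚ)+1) * CraigAux.Yc xh 0 = (e:ℚ) * c := by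
      have he0K : e0 ∈ K := by rw [he0]; exact Submodule.mem_span_singleton_self e0
      obtain ⟨x1, hx1M, hx1⟩ := he0K
      rcases Int.natAbs_eq e0 with hsgn | hsgn
      · refine ⟨x1, hx1M, ?_⟩
        rw [← hψ, hx1, LinearMap.toSpanSingleton_apply, zsmul_eq_mul, hsgn, ← he]
        push_cast
        ring
      · refine ⟨-x1, M.neg_mem hx1M, ?_⟩
        have : ψ (-x1) = - ψ x1 := by rw [map_neg]
        rw [← hψ, this, hx1, LinearMap.toSpanSingleton_apply, zsmul_eq_mul, hsgn, ← he]
        push_cast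
        ring
    obtain ⟨xh, hxhM, hxh⟩ := hxhat
    -- every element has (n+1)y₀ ∈ ecℤ
    have hKm : ∀ x ∈ M, ∃ m : ℤ, ((n:ℚ)+1) * CraigAux.Yc x 0 = (m:ℚ) * (e:ℚ) * c := by
      intro x hx
      obtain ⟨a, ha⟩ := hψspan x hx
      have haK : a ∈ K := by
        show (LinearMap.toSpanSingleton ℤ ℚ c) a ∈ M.map ψ
        rw [LinearMap.toSpanSingleton_apply]
        exact ⟨x, hx, by rw [hψ, ← ha, zsmul_eq_mul]⟩
      rw [he0, Submodule.mem_span_singleton] at haK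
      obtain ⟨b, hb⟩ := haK
      rcases Int.natAbs_eq e0 with hsgn | hsgn
      · refine ⟨b, ?_⟩
        rw [← ha, ← hb, smul_eq_mul, hsgn, ← he]
        push_cast
        ring
      · refine ⟨-b, ?_⟩
        rw [← ha, ← hb, smul_eq_mul, hsgn, ← he]
        push_cast
        ring
    -- coordinate formula
    have hco : ∀ x ∈ M, ∀ z : ℕ → ℤ,
        (∀ i, i ≤ n → (z i : ℚ) * c = CraigAux.Yc x 0 - CraigAux.Yc x i) →
        ∀ j : ℕ, j < n → CraigAux.xZ x (j:ℤ)
          = (-1:ℚ)^j * (((j:ℚ)+1) * CraigAux.Yc x 0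
              - c * ((∑ i ∈ Finset.range (j+1), z i : ℤ) : ℚ)) := by
      intro x hx z hz j hj
      have hS := CraigAux.sum_Yc x j
      have hsum2 : (∑ i ∈ Finset.range (j+1), CraigAux.Yc x i)
          = ((j:ℚ)+1) * CraigAux.Yc x 0
            - c * ((∑ i ∈ Finset.range (j+1), z i : ℤ) : ℚ) := by
        have hrw : ∀ i ∈ Finset.range (j+1),
            CraigAux.Yc x i = CraigAux.Yc x 0 - (z i : ℚ) * c := by
          intro i hi
          have hi2 : i ≤ n := by
            have := Finset.mem_range.mp hi
            omega
          have := hz i hi2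
          linarith [this]
        rw [Finset.sum_congr rfl hrw, Finset.sum_sub_distrib, Finset.sum_const,
          Finset.card_range]
        push_cast
        rw [← Finset.sum_mul]
        ring
      rw [hsum2] at hS
      have hsq : (-1:ℚ)^j * ((-1:ℚ)^j) = 1 := by
        rw [← pow_add]
        exact Even.neg_one_pow ⟨j, rfl⟩
      linear_combination (-((-1:ℚ)^j)) * hS - CraigAux.xZ x (j:ℤ) * hsq
    -- THE TWO INCLUSIONS
    refine ⟨d, hd0, hddvd, (d:ℚ)/c, div_ne_zero (by exact_mod_cast hd0.ne') hc0, ?_, ?_⟩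
    · -- M.map μ ⊆ craigL
      intro x hx
      obtain ⟨z, hz⟩ := hzx x hx
      obtain ⟨m, hm⟩ := hKm x hx
      have hn1 : ((n:ℚ)+1) ≠ 0 := by positivity
      have hdY : (d:ℚ) * CraigAux.Yc x 0 = (m:ℚ) * c := by
        apply mul_left_cancel₀ hn1
        linear_combination (d:ℚ) * hm + ((m:ℚ) * c) * hdeQ
      set Z : ℕ → ℤ := fun j => ∑ i ∈ Finset.range (j+1), z i with hZ
      set m1 : ℤ := (-1:ℤ)^(n-1) * ((n:ℤ) * m - (d:ℤ) * Z (n-1)) with hm1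
      set af : ℕ → ℤ := fun j =>
        (-1:ℤ)^j * (((j:ℤ)+1) * (e:ℤ) * m - Z j - ((j:ℤ)+1) * Z (n-1)) with haf
      have hdec : ((d:ℚ)/c) • x = m1 • craigV n +
          ∑ j : Fin n, (if (j:ℕ) < n - 1 then af (j:ℕ) else 0) •
            ((d:ℚ) • (Pi.single j (1:ℚ) : Fin n → ℚ)) := by
        funext i
        rw [Pi.add_apply, Finset.sum_apply]
        have hsummand : ∀ j : Fin n,
            ((if (j:ℕ) < n - 1 then af (j:ℕ) else 0) •
              ((d:ℚ) • (Pi.single j (1:ℚ) : Fin n → ℚ))) i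
            = (if i = j then (if (j:ℕ) < n - 1 then (af (j:ℕ) : ℚ) else 0) * d else 0) := by
          intro j
          rw [Pi.smul_apply, Pi.smul_apply, Pi.single_apply]
          split_ifs <;> simp [zsmul_eq_mul]
        rw [Finset.sum_congr rfl (fun j _ => hsummand j), Finset.sum_ite_eq,
          if_pos (Finset.mem_univ i), Pi.smul_apply, Pi.smul_apply, smul_eq_mul, zsmul_eq_mul]
        rw [show x i = CraigAux.xZ x ((i:ℕ):ℤ) from (CraigAux.xZ_coe x i).symm]
        rw [hco x hx z hz (i:ℕ) i.isLt]
        by_cases hilt : (i:ℕ) < n - 1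
        · rw [if_pos hilt]
          have hvi : craigV n i = (-1:ℚ)^(n - (i:ℕ)) * ((i:ℕ)+1) := by
            rw [craigV, if_neg (by omega)]
          rw [hvi, div_mul_eq_mul_div, div_eq_iff hc0]
          have p5 : (-1:ℚ)^(n-1) * (-1:ℚ)^(n-(i:ℕ)) = -((-1:ℚ)^(i:ℕ)) := by
            rw [← pow_add, CraigAux.neg_one_pow_par ((n-1)+(n-(i:ℕ))) ((i:ℕ)+1) (by omega),
              pow_succ]
            ring
          have hfold : ∀ jj : ℕ, (∑ i2 ∈ Finset.range (jj+1), z i2) = Z jj := fun jj => by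
            rw [hZ]
          rw [hfold]
          push_cast [hm1, haf]
          linear_combination ((((i:ℕ):ℚ)+1) * ((-1:ℚ)^(i:ℕ))) * hdY
            + (-((((i:ℕ):ℚ)+1)) * (n:ℚ) * (m:ℚ) * c
                + (((i:ℕ):ℚ)+1) * (d:ℚ) * ((Z (n-1) : ℤ):ℚ) * c) * p5
            + (-(((-1:ℚ)^(i:ℕ)) * (((i:ℕ):ℚ)+1) * (m:ℚ) * c)) * hdeQ
        · rw [if_neg hilt]
          have hieq : (i:ℕ) = n - 1 := by have := i.isLt; omega
          have hvi : craigV n i = 1 := by rw [craigV, if_pos hieq]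
          rw [hvi, hieq, div_mul_eq_mul_div, div_eq_iff hc0]
          have hfold : ∀ jj : ℕ, (∑ i2 ∈ Finset.range (jj+1), z i2) = Z jj := fun jj => by
            rw [hZ]
          rw [hfold]
          push_cast [hm1, Nat.cast_sub (show 1 ≤ n by omega)]
          linear_combination ((n:ℚ) * ((-1:ℚ)^(n-1))) * hdY
      rw [hdec]
      refine Submodule.add_mem _
        (Submodule.smul_mem _ m1 (Submodule.subset_span (Set.mem_insert _ _)))
        (Submodule.sum_mem _ (fun j _ => ?_))
      by_cases hj : (j:ℕ) < n - 1
      · rw [if_pos hj]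
        exact Submodule.smul_mem _ _
          (Submodule.subset_span (Set.mem_insert_of_mem _ ⟨j, hj, rfl⟩))
      · rw [if_neg hj, zero_smul]
        exact Submodule.zero_mem _
    · -- craigL ⊆ M.map μ
      have hdQ0 : (d:ℚ) ≠ 0 := by exact_mod_cast hd0.ne'
      have hn1 : ((n:ℚ)+1) ≠ 0 := by positivity
      have hYh : (d:ℚ) * CraigAux.Yc xh 0 = c := by
        apply mul_left_cancel₀ hn1
        linear_combination (d:ℚ) * hxh + c * hdeQ
      have hvmem : ((d:ℚ)/c)⁻¹ • craigV n ∈ M := by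
        obtain ⟨zh, hzh⟩ := hzx xh hxhM
        set Zh : ℕ → ℤ := fun j => ∑ i ∈ Finset.range (j+1), zh i with hZh
        set tf : ℕ → ℤ := fun j =>
          if j = n-1 then (e:ℤ) - Zh (n-1) else (-1:ℤ)^(n+j) * Zh j with htf
        have hdec2 : ((d:ℚ)/c)⁻¹ • craigV n = ((-1:ℤ)^n) • xh +
            ∑ j : Fin n, (tf (j:ℕ)) • (c • (Pi.single j (1:ℚ) : Fin n → ℚ)) := by
          funext i
          rw [Pi.add_apply, Finset.sum_apply]
          have hsummand : ∀ j : Fin n,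
              ((tf (j:ℕ)) • (c • (Pi.single j (1:ℚ) : Fin n → ℚ))) i
              = (if i = j then (tf (j:ℕ) : ℚ) * c else 0) := by
            intro j
            rw [Pi.smul_apply, Pi.smul_apply, Pi.single_apply]
            split_ifs <;> simp [zsmul_eq_mul]
          rw [Finset.sum_congr rfl (fun j _ => hsummand j), Finset.sum_ite_eq,
            if_pos (Finset.mem_univ i), Pi.smul_apply, Pi.smul_apply, smul_eq_mul, zsmul_eq_mul]
          rw [show xh i = CraigAux.xZ xh ((i:ℕ):ℤ) from (CraigAux.xZ_coe xh i).symm]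
          rw [hco xh hxhM zh hzh (i:ℕ) i.isLt, inv_div]
          by_cases hilt : (i:ℕ) < n - 1
          · have hvi : craigV n i = (-1:ℚ)^(n - (i:ℕ)) * ((i:ℕ)+1) := by
              rw [craigV, if_neg (by omega)]
            rw [hvi, htf]
            simp only [if_neg (show ¬((i:ℕ) = n-1) by omega)]
            rw [div_mul_eq_mul_div, div_eq_iff hdQ0]
            have hfold2 : ∀ jj : ℕ, (∑ i2 ∈ Finset.range (jj+1), zh i2) = Zh jj := fun jj => by
              rw [hZh]
            rw [hfold2]
            have q7 : (-1:ℚ)^n * (-1:ℚ)^((i:ℕ)) = (-1:ℚ)^(n-(i:ℕ)) := by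
              rw [← pow_add]
              exact CraigAux.neg_one_pow_par _ _ (by omega)
            have q8 : (-1:ℚ)^(n+(i:ℕ)) = (-1:ℚ)^n * (-1:ℚ)^((i:ℕ)) := pow_add _ _ _
            push_cast [q8]
            linear_combination (-((((i:ℕ):ℚ)+1) * CraigAux.Yc xh 0 * (d:ℚ))) * q7
              + (-(((-1:ℚ)^(n-(i:ℕ))) * (((i:ℕ):ℚ)+1))) * hYh
          · have hieq : (i:ℕ) = n - 1 := by have := i.isLt; omega
            have hvi : craigV n i = 1 := by rw [craigV, if_pos hieq]
            rw [hvi, htf]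
            simp only [if_pos hieq]
            rw [hieq, div_mul_eq_mul_div, div_eq_iff hdQ0]
            have hfold2 : ∀ jj : ℕ, (∑ i2 ∈ Finset.range (jj+1), zh i2) = Zh jj := fun jj => by
              rw [hZh]
            rw [hfold2]
            have q6 : (-1:ℚ)^n * (-1:ℚ)^(n-1) = -1 := by
              rw [← pow_add, CraigAux.neg_one_pow_par (n+(n-1)) 1 (by omega), pow_one]
            push_cast [Nat.cast_sub (show 1 ≤ n by omega)]
            linear_combination (-(((n:ℚ)) * CraigAux.Yc xh 0 * (d:ℚ))
                + c * ((Zh (n-1) : ℤ):ℚ) * (d:ℚ)) * q6 + ((n:ℚ)) * hYh + (-c) * hdeQ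
        rw [hdec2]
        refine Submodule.add_mem _ (Submodule.smul_mem _ _ hxhM)
          (Submodule.sum_mem _ (fun j _ => Submodule.smul_mem _ _ ?_))
        have := hsingle (j:ℕ) j.isLt
        simpa using this
      intro y hy
      rw [craigL] at hy
      induction hy using Submodule.span_induction with
      | mem w hw =>
        rcases hw with rfl | ⟨j, hj, rfl⟩
        · exact hvmem
        · rw [smul_smul, inv_div, div_mul_cancel₀ _ hdQ0]
          have := hsingle (j:ℕ) j.isLt
          simpa using this
      | zero => rw [smul_zero]; exact Submodule.zero_mem _
      | add w1 w2 _ _ hp1 hp2 => rw [smul_add]; exact Submodule.add_mem _ hp1 hp2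
      | smul a w _ hp => rw [smul_comm]; exact Submodule.smul_mem _ a hp


  refine ⟨d, hd0, hdvd, ?_⟩
  refine ⟨{ toFun := fun x => ⟨μ • (x : Fin n → ℚ), h1 _ x.2⟩
            invFun := fun y => ⟨μ⁻¹ • (y : Fin n → ℚ), h2 _ y.2⟩
            map_add' := fun x y => by
              apply Subtype.ext
              simp [smul_add]
            map_smul' := fun a x => by
              apply Subtype.ext
              simp [smul_comm]
            left_inv := fun x => by
              apply Subtype.ext
              simp [smul_smul, inv_mul_cancel₀ hμ0]
            right_inv := fun y => by
              apply Subtype.ext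
              simp [smul_smul, mul_inv_cancel₀ hμ0] }, ?_⟩
  intro g x hx
  simp only [LinearEquiv.coe_mk, LinearMap.coe_mk, AddHom.coe_mk]
  exact (Matrix.mulVec_smul _ _ _).symm
end

section
/- Let p be a prime and let L ⊆ L(1) be a ℤG-sublattice such that p^c·L(1) ⊆ L for some integer c ≥ 1. Then there exist integers a, b ≥ 0 with a + b ≤ c and b ≤ v_p(n+1) such that L = p^a·L(p^b). -/
open Pointwise

namespace CraigAux

variable {n : ℕ}

/-- standard basis vector -/
def clE (n : ℕ) (j : Fin n) : Fin n → ℚ := Pi.single j 1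

/-- the kernel vector `w`, `w_j = (-1)^(j+1) (j+1)` (0-based). -/
def ww (n : ℕ) : Fin n → ℚ := fun j => (-1)^((j:ℕ)+1) * ((j:ℕ)+1)

def FF (n : ℕ) (k : Fin n) (x : Fin n → ℚ) : ℚ :=
  (∑ j : Fin n, if (j:ℕ)+1 = (k:ℕ) then x j else 0) + 2 * x k
    + ∑ j : Fin n, if (j:ℕ) = (k:ℕ)+1 then x j else 0

lemma craigA_mulVec_add (n : ℕ) (k : Fin n) (x : Fin n → ℚ) :
    (craigA n k).mulVec x + x = Pi.single k (FF n k x) := by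
  funext i
  simp only [Pi.add_apply, Matrix.mulVec, dotProduct, craigA, Matrix.of_apply,
    add_mul, sub_mul, ite_mul, one_mul, zero_mul, two_mul,
    Finset.sum_add_distrib, Finset.sum_sub_distrib]
  have h4 : ∑ j, (if i = j then x j else 0) = x i := by
    rw [Finset.sum_ite_eq]; simp
  rw [h4]
  rcases eq_or_ne i k with rfl | hik
  · have hik' : (i:ℕ) = (i:ℕ) := rfl
    simp only [true_and, hik', if_true, FF, Pi.single_eq_same]
    have h2 : ∑ j : Fin n, (if (j:ℕ) = (i:ℕ) then x j + x j else 0) = x i + x i := by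
      simp only [Fin.val_eq_val, Finset.sum_ite_eq']; simp
    rw [h2]; ring
  · have hik' : ¬ (i:ℕ) = (k:ℕ) := fun h => hik (Fin.ext h)
    simp only [hik', false_and, if_false, Pi.single_eq_of_ne hik]
    simp

lemma sum_ite_val (m : ℕ) (x : Fin n → ℚ) :
    (∑ j : Fin n, if (j:ℕ) = m then x j else 0) = if h : m < n then x ⟨m, h⟩ else 0 := by
  split
  · next h =>
      have h1 : ∀ j : Fin n, (if (j:ℕ) = m then x j else 0)
          = (if j = (⟨m, h⟩ : Fin n) then x j else 0) := fun j =>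
        if_congr ⟨fun hj => Fin.ext hj, fun hj => congrArg Fin.val hj⟩ rfl rfl
      rw [Finset.sum_congr rfl fun j _ => h1 j, Finset.sum_ite_eq']
      simp
  · next h =>
      apply Finset.sum_eq_zero; intro j _
      have := j.isLt
      exact if_neg (by omega)

lemma sum_ite_shift (k : Fin n) (x : Fin n → ℚ) :
    (∑ j : Fin n, if (j:ℕ)+1 = (k:ℕ) then x j else 0)
      = if h : 0 < (k:ℕ) then x ⟨(k:ℕ)-1, by omega⟩ else 0 := by
  rcases Nat.eq_zero_or_pos (k:ℕ) with hk | hk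
  · rw [dif_neg (by omega)]
    apply Finset.sum_eq_zero; intro j _; exact if_neg (by omega)
  · have h1 : ∀ j : Fin n, (if (j:ℕ)+1 = (k:ℕ) then x j else 0)
        = (if (j:ℕ) = (k:ℕ)-1 then x j else 0) := fun j =>
      if_congr (by omega) rfl rfl
    rw [Finset.sum_congr rfl fun j _ => h1 j, sum_ite_val, dif_pos (by omega), dif_pos hk]

lemma FF_eq (k : Fin n) (x : Fin n → ℚ) :
    FF n k x = (if h : 0 < (k:ℕ) then x ⟨(k:ℕ)-1, by omega⟩ else 0) + 2 * x k
      + (if h : (k:ℕ)+1 < n then x ⟨(k:ℕ)+1, h⟩ else 0) := by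
  unfold FF
  rw [sum_ite_shift, sum_ite_val]

lemma FF_add (k : Fin n) (x y : Fin n → ℚ) : FF n k (x + y) = FF n k x + FF n k y := by
  simp only [FF_eq, Pi.add_apply]
  split <;> split <;> ring

lemma FF_smul (k : Fin n) (q : ℚ) (x : Fin n → ℚ) : FF n k (q • x) = q * FF n k x := by
  simp only [FF_eq, Pi.smul_apply, smul_eq_mul]
  split <;> split <;> ring

lemma FF_ww_of_lt (k : Fin n) (h : (k:ℕ)+1 < n) : FF n k (ww n) = 0 := by
  rw [FF_eq, dif_pos h]
  rcases Nat.eq_zero_or_pos (k:ℕ) with hk | hk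
  · rw [dif_neg (by omega)]
    simp only [ww, hk]
    norm_num
  · rw [dif_pos hk]
    simp only [ww]
    obtain ⟨m, hm⟩ := Nat.exists_eq_add_of_le hk
    have e1 : (k:ℕ) - 1 + 1 = (k:ℕ) := by omega
    rw [e1]
    have e2 : (((k:ℕ) - 1 : ℕ) : ℚ) = ((k:ℕ) : ℚ) - 1 := by
      push_cast [hk]; ring
    rw [e2]
    push_cast
    rw [pow_succ, pow_succ]
    ring

lemma FF_ww_last (h2 : 2 ≤ n) (k : Fin n) (hk : (k:ℕ) = n - 1) :
    FF n k (ww n) = (-1)^n * (n+1) := by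
  obtain ⟨m, hm⟩ := Nat.exists_eq_add_of_le h2
  rw [FF_eq, dif_pos (by omega), dif_neg (by omega)]
  simp only [ww]
  have e1 : (k:ℕ) - 1 + 1 = m + 1 := by omega
  have e2 : (((k:ℕ) - 1 : ℕ) : ℚ) = (m:ℚ) := by
    have : (k:ℕ) - 1 = m := by omega
    rw [this]
  have e3 : (k:ℕ) + 1 = m + 2 := by omega
  have e4 : ((k:ℕ) : ℚ) = (m:ℚ) + 1 := by
    have : (k:ℕ) = m + 1 := by omega
    rw [this]; push_cast; ring
  have e5 : n = m + 2 := by omega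
  rw [e1, e2, e3, e4, e5]
  push_cast
  rw [pow_succ, pow_succ]
  ring

lemma FF_single_succ (j k : Fin n) (hk : (k:ℕ) = (j:ℕ)+1) (q : ℚ) :
    FF n k (q • clE n j) = q := by
  simp only [clE]
  rw [FF_eq, dif_pos (by omega)]
  have h1 : (⟨(k:ℕ)-1, by omega⟩ : Fin n) = j := Fin.ext (by simp; omega)
  rw [h1]
  simp only [Pi.smul_apply, smul_eq_mul, Pi.single_eq_same, mul_one]
  have h2 : (Pi.single j (1:ℚ) : Fin n → ℚ) k = 0 := Pi.single_eq_of_ne (show k ≠ j by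
    intro h; rw [h] at hk; omega) 1
  rw [h2]
  split
  · next h =>
      have h3 : (Pi.single j (1:ℚ) : Fin n → ℚ) ⟨(k:ℕ)+1, h⟩ = 0 := Pi.single_eq_of_ne (by
        intro hcontra
        have := congrArg Fin.val hcontra
        simp at this; omega) 1
      rw [h3]; ring
  · ring

lemma FF_single_pred (j k : Fin n) (hj : (j:ℕ) = (k:ℕ)+1) (q : ℚ) :
    FF n k (q • clE n j) = q := by
  simp only [clE]
  rw [FF_eq, dif_pos (show (k:ℕ)+1 < n by have := j.isLt; omega)]
  have h1 : (⟨(k:ℕ)+1, by have := j.isLt; omega⟩ : Fin n) = j := Fin.ext (by simp [hj])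
  rw [h1]
  simp only [Pi.smul_apply, smul_eq_mul, Pi.single_eq_same, mul_one]
  have h2 : (Pi.single j (1:ℚ) : Fin n → ℚ) k = 0 := Pi.single_eq_of_ne (show k ≠ j by
    intro h; rw [h] at hj; omega) 1
  rw [h2]
  split
  · next h =>
      have h3 : (Pi.single j (1:ℚ) : Fin n → ℚ) ⟨(k:ℕ)-1, by omega⟩ = 0 := Pi.single_eq_of_ne (by
        intro hcontra
        have := congrArg Fin.val hcontra
        simp at this; omega) 1
      rw [h3]; ring
  · ring

lemma single_smul_eq (k : Fin n) (q : ℚ) : (Pi.single k q : Fin n → ℚ) = q • clE n k := by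
  funext i
  rcases eq_or_ne i k with rfl | h
  · simp [clE]
  · simp [clE, Pi.single_eq_of_ne h]

lemma eq_sum_singles (x : Fin n → ℚ) : x = ∑ j, x j • clE n j := by
  conv_lhs => rw [← Finset.univ_sum_single x]
  exact Finset.sum_congr rfl fun j _ => single_smul_eq j (x j)

lemma mem_psmul {q : ℚ} {N : Submodule ℤ (Fin n → ℚ)} {x : Fin n → ℚ} :
    x ∈ q • N ↔ ∃ y ∈ N, q • y = x := by
  rw [← SetLike.mem_coe, Submodule.coe_pointwise_smul]
  exact Set.mem_smul_set

section Main

variable {p c : ℕ} {L : Submodule ℤ (Fin n → ℚ)}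
variable (hBase : ∀ k : Fin n, ∀ x ∈ L, (craigA n k).mulVec x ∈ L)

include hBase in
lemma mem_FF {x : Fin n → ℚ} (hx : x ∈ L) (k : Fin n) :
    (FF n k x) • clE n k ∈ L := by
  have h1 := L.add_mem (hBase k x hx) hx
  rw [craigA_mulVec_add, single_smul_eq] at h1
  exact h1

include hBase in
lemma chain {q : ℚ} {j : Fin n} (h : q • clE n j ∈ L) (j' : Fin n) :
    q • clE n j' ∈ L := by
  have hn0 : 0 < n := j.pos
  have up : ∀ (m : ℕ) (h1 : m + 1 < n), q • clE n ⟨m, by omega⟩ ∈ L →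
      q • clE n ⟨m+1, h1⟩ ∈ L := by
    intro m h1 hm
    have := mem_FF hBase hm ⟨m+1, h1⟩
    rwa [FF_single_succ _ _ rfl] at this
  have down : ∀ (m : ℕ) (h1 : m + 1 < n), q • clE n ⟨m+1, h1⟩ ∈ L →
      q • clE n ⟨m, by omega⟩ ∈ L := by
    intro m h1 hm
    have := mem_FF hBase hm ⟨m, by omega⟩
    rwa [FF_single_pred _ _ rfl] at this
  have to0 : ∀ (m : ℕ) (h1 : m < n), q • clE n ⟨m, h1⟩ ∈ L →
      q • clE n ⟨0, hn0⟩ ∈ L := by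
    intro m
    induction m with
    | zero => exact fun h1 hm => hm
    | succ m ih => exact fun h1 hm => ih (by omega) (down m h1 hm)
  have from0 : ∀ (m : ℕ) (h1 : m < n), q • clE n ⟨0, hn0⟩ ∈ L →
      q • clE n ⟨m, h1⟩ ∈ L := by
    intro m
    induction m with
    | zero => exact fun h1 hm => hm
    | succ m ih => exact fun h1 hm => up m h1 (ih (by omega) hm)
  have h0 : q • clE n ⟨0, hn0⟩ ∈ L := to0 (j:ℕ) j.isLt (by rwa [Fin.eta])
  have := from0 (j':ℕ) j'.isLt h0
  rwa [Fin.eta] at this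

end Main

end CraigAux

namespace CraigAux2
open CraigAux

variable {n : ℕ}

def wz (n : ℕ) (j : Fin n) : ℤ := (-1)^((j:ℕ)+1) * ((j:ℕ)+1)

lemma ww_cast (j : Fin n) : ww n j = ((wz n j : ℤ) : ℚ) := by
  simp only [ww, wz]; push_cast; ring

section A

variable {p c : ℕ} {L : Submodule ℤ (Fin n → ℚ)}
variable (hp : p.Prime)
variable (hBase : ∀ k : Fin n, ∀ x ∈ L, (craigA n k).mulVec x ∈ L)

include hp hBase in
lemma exists_m (hn : 0 < n) (hpc : ((p:ℚ)^c) • clE n ⟨0, hn⟩ ∈ L) :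
    ∃ m ≤ c, ∀ (j : Fin n) (s : ℤ), ((s:ℚ) • clE n j ∈ L ↔ (p:ℤ)^m ∣ s) := by
  set j0 : Fin n := ⟨0, hn⟩ with hj0
  set SS : Ideal ℤ :=
    { carrier := {s : ℤ | (s:ℚ) • clE n j0 ∈ L}
      add_mem' := by
        intro a b ha hb
        simp only [Set.mem_setOf_eq] at *
        rw [Int.cast_add, add_smul]
        exact L.add_mem ha hb
      zero_mem' := by
        simp only [Set.mem_setOf_eq, Int.cast_zero, zero_smul]
        exact L.zero_mem
      smul_mem' := by
        intro a s hs
        simp only [Set.mem_setOf_eq, smul_eq_mul] at *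
        rw [Int.cast_mul, mul_smul, Int.cast_smul_eq_zsmul]
        exact L.smul_mem a hs } with hSS
  obtain ⟨d, hd⟩ := (IsPrincipalIdealRing.principal SS).principal
  have hmem : ∀ s : ℤ, ((s:ℚ) • clE n j0 ∈ L ↔ d ∣ s) := by
    intro s
    constructor
    · intro h
      have : s ∈ SS := h
      rw [hd] at this
      exact Ideal.mem_span_singleton.mp this
    · intro h
      have h2 : s ∈ SS := by rw [hd]; exact Ideal.mem_span_singleton.mpr h
      exact h2
  have hpcS : d ∣ (p:ℤ)^c := by
    rw [← hmem]
    have : (((p:ℤ)^c : ℤ) : ℚ) = (p:ℚ)^c := by push_cast; ring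
    rw [this]
    exact hpc
  have hdn : d.natAbs ∣ p^c := by
    have h3 := Int.natAbs_dvd_natAbs.mpr hpcS
    rwa [Int.natAbs_pow, Int.natAbs_natCast] at h3
  obtain ⟨m, hmc, hm⟩ := (Nat.dvd_prime_pow hp).mp hdn
  refine ⟨m, hmc, ?_⟩
  have key : ∀ s : ℤ, ((s:ℚ) • clE n j0 ∈ L ↔ (p:ℤ)^m ∣ s) := by
    intro s
    rw [hmem s, ← Int.natAbs_dvd, hm]
    push_cast
    rfl
  intro j s
  constructor
  · intro h
    exact (key s).mp (chain hBase h j0)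
  · intro h
    exact chain hBase ((key s).mpr h) j

include hp hBase in
lemma exists_r {m : ℕ}
    (hS : ∀ (j : Fin n) (s : ℤ), ((s:ℚ) • clE n j ∈ L ↔ (p:ℤ)^m ∣ s)) :
    ∃ r ≤ m, ∀ t : ℤ, ((t:ℚ) • ww n ∈ L ↔ (p:ℤ)^r ∣ t) := by
  set TT : Ideal ℤ :=
    { carrier := {t : ℤ | (t:ℚ) • ww n ∈ L}
      add_mem' := by
        intro a b ha hb
        simp only [Set.mem_setOf_eq] at *
        rw [Int.cast_add, add_smul]
        exact L.add_mem ha hb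
      zero_mem' := by
        simp only [Set.mem_setOf_eq, Int.cast_zero, zero_smul]
        exact L.zero_mem
      smul_mem' := by
        intro a s hs
        simp only [Set.mem_setOf_eq, smul_eq_mul] at *
        rw [Int.cast_mul, mul_smul, Int.cast_smul_eq_zsmul]
        exact L.smul_mem a hs } with hTT
  obtain ⟨d, hd⟩ := (IsPrincipalIdealRing.principal TT).principal
  have hmem : ∀ t : ℤ, ((t:ℚ) • ww n ∈ L ↔ d ∣ t) := by
    intro t
    constructor
    · intro h
      have : t ∈ TT := h
      rw [hd] at this
      exact Ideal.mem_span_singleton.mp this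
    · intro h
      have h2 : t ∈ TT := by rw [hd]; exact Ideal.mem_span_singleton.mpr h
      exact h2
  have hpmT : ((((p:ℤ)^m : ℤ)) : ℚ) • ww n ∈ L := by
    have hterm : ∀ j : Fin n, (((p:ℤ)^m * wz n j : ℤ) : ℚ) • clE n j ∈ L :=
      fun j => (hS j _).mpr (dvd_mul_right _ _)
    have hsum : ((((p:ℤ)^m : ℤ)) : ℚ) • ww n = ∑ j, (((p:ℤ)^m * wz n j : ℤ) : ℚ) • clE n j := by
      conv_lhs => rw [eq_sum_singles (ww n)]
      rw [Finset.smul_sum]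
      refine Finset.sum_congr rfl fun j _ => ?_
      rw [smul_smul, ww_cast]
      push_cast
      ring_nf
    rw [hsum]
    exact Submodule.sum_mem L fun j _ => hterm j
  have hdm : d ∣ (p:ℤ)^m := (hmem _).mp hpmT
  have hdn : d.natAbs ∣ p^m := by
    have h3 := Int.natAbs_dvd_natAbs.mpr hdm
    rwa [Int.natAbs_pow, Int.natAbs_natCast] at h3
  obtain ⟨r, hrm, hr⟩ := (Nat.dvd_prime_pow hp).mp hdn
  refine ⟨r, hrm, fun t => ?_⟩
  rw [hmem t, ← Int.natAbs_dvd, hr]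
  push_cast
  rfl

end A

end CraigAux2

namespace CraigAux3
open CraigAux CraigAux2

variable {n : ℕ} {p c : ℕ} {L : Submodule ℤ (Fin n → ℚ)}
variable (hp : p.Prime)
variable (hBase : ∀ k : Fin n, ∀ x ∈ L, (craigA n k).mulVec x ∈ L)

include hp hBase in
lemma m_le_r_add (hn : 2 ≤ n) {m r : ℕ}
    (hS : ∀ (j : Fin n) (s : ℤ), ((s:ℚ) • clE n j ∈ L ↔ (p:ℤ)^m ∣ s))
    (hT : ((((p:ℤ)^r : ℤ)) : ℚ) • ww n ∈ L) :
    m ≤ r + padicValNat p (n+1) := by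
  set k : Fin n := ⟨n-1, by omega⟩ with hk
  have h1 := mem_FF hBase hT k
  rw [FF_smul, FF_ww_last hn k rfl] at h1
  have hcast : ((((p:ℤ)^r : ℤ)):ℚ) * ((-1)^n * ((n:ℚ)+1))
      = (((p:ℤ)^r * (-1)^n * ((n:ℤ)+1) : ℤ) : ℚ) := by push_cast; ring
  rw [hcast] at h1
  have h2 := (hS k _).mp h1
  have h4 := Int.natAbs_dvd_natAbs.mpr h2
  have e1 : ((-1:ℤ)^n).natAbs = 1 := by rw [Int.natAbs_pow]; simp
  have e2 : ((n:ℤ)+1).natAbs = n+1 := by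
    rw [show ((n:ℤ)+1) = ((n+1:ℕ):ℤ) by push_cast; ring, Int.natAbs_natCast]
  have h5 : ((p:ℤ)^r * (-1)^n * ((n:ℤ)+1)).natAbs = p^r * (n+1) := by
    rw [Int.natAbs_mul, Int.natAbs_mul, Int.natAbs_pow, e1, e2, Int.natAbs_natCast]
    ring
  rw [h5, Int.natAbs_pow, Int.natAbs_natCast] at h4
  have hne : p^r * (n+1) ≠ 0 := Nat.mul_ne_zero (pow_ne_zero _ hp.pos.ne') (Nat.succ_ne_zero n)
  have h6 := (Nat.Prime.pow_dvd_iff_le_factorization hp hne).mp h4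
  rw [Nat.factorization_mul (pow_ne_zero _ hp.pos.ne') (Nat.succ_ne_zero n)] at h6
  rw [Finsupp.add_apply, Nat.Prime.factorization_pow hp, Finsupp.single_eq_same,
    Nat.factorization_def _ hp] at h6
  simpa using h6

lemma intvec_mem {m : ℕ}
    (hS : ∀ (j : Fin n) (s : ℤ), ((s:ℚ) • clE n j ∈ L ↔ (p:ℤ)^m ∣ s))
    (y : Fin n → ℤ) : (fun i => (((p:ℤ)^m * y i : ℤ) : ℚ)) ∈ L := by
  have hx : (fun i => (((p:ℤ)^m * y i : ℤ) : ℚ))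
      = ∑ j, (((p:ℤ)^m * y j : ℤ) : ℚ) • clE n j :=
    eq_sum_singles _
  rw [hx]
  exact Submodule.sum_mem L fun j _ => (hS j _).mpr (dvd_mul_right _ _)

include hBase in
lemma decomp (hn : 2 ≤ n) {m r : ℕ}
    (hS : ∀ (j : Fin n) (s : ℤ), ((s:ℚ) • clE n j ∈ L ↔ (p:ℤ)^m ∣ s))
    (hT : ∀ t : ℤ, ((t:ℚ) • ww n ∈ L ↔ (p:ℤ)^r ∣ t))
    (hsub : ∀ x ∈ L, ∀ i, ∃ t : ℤ, x i = (t:ℚ))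
    {x : Fin n → ℚ} (hx : x ∈ L) :
    ∃ (t : ℤ) (y : Fin n → ℤ),
      x = (fun i => (((p:ℤ)^m * y i : ℤ) : ℚ)) + ((t * (p:ℤ)^r : ℤ) : ℚ) • ww n := by
  choose xi hxi using hsub x hx
  set x0 : ℤ := xi ⟨0, by omega⟩ with hx0
  set z : Fin n → ℚ := x + (x0 : ℚ) • ww n with hz
  have hdvd : ∀ (jj : ℕ), ∀ (hjj : jj < n), ∃ u : ℤ, z ⟨jj, hjj⟩ = (((p:ℤ)^m * u : ℤ) : ℚ) := by
    intro jj
    induction jj using Nat.strong_induction_on with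
    | _ jj ih =>
      intro hjj
      match jj, hjj with
      | 0, hjj =>
        refine ⟨0, ?_⟩
        have e1 : z ⟨0, hjj⟩ = x ⟨0, hjj⟩ + (x0:ℚ) * ww n ⟨0, hjj⟩ := rfl
        have e2 : ww n ⟨0, hjj⟩ = -1 := by simp [ww]
        have e3 : x ⟨0, hjj⟩ = (x0 : ℚ) := hxi ⟨0, hjj⟩
        rw [e1, e2, e3]
        push_cast
        ring
      | (j' + 1), hjj =>
        set k : Fin n := ⟨j', by omega⟩ with hkdef
        -- FF n k x is an integer divisible by p^m
        have hFFmem := mem_FF hBase hx k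
        obtain ⟨s, hs⟩ := hsub _ hFFmem k
        have hsval : ((FF n k x) • clE n k) k = FF n k x := by
          simp [clE]
        rw [hsval] at hs
        rw [hs] at hFFmem
        have hdvds : (p:ℤ)^m ∣ s := (hS k s).mp hFFmem
        -- FF of z equals FF of x
        have hFFz : FF n k z = (s : ℚ) := by
          rw [hz, FF_add, FF_smul, FF_ww_of_lt k (show (k:ℕ)+1 < n from hjj), hs]
          ring
        -- expand FF via FF_eq
        rw [FF_eq] at hFFz
        have hlast : (if h : (k:ℕ)+1 < n then z ⟨(k:ℕ)+1, h⟩ else 0) = z ⟨j'+1, hjj⟩ := by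
          rw [dif_pos (show (k:ℕ)+1 < n from hjj)]
        rw [hlast] at hFFz
        -- previous terms divisible
        obtain ⟨u1, hu1⟩ := ih j' (by omega) (by omega)
        have hprev : ∃ u0 : ℤ,
            (if h : 0 < (k:ℕ) then z ⟨(k:ℕ)-1, by omega⟩ else 0) = (((p:ℤ)^m * u0 : ℤ) : ℚ) := by
          rcases Nat.eq_zero_or_pos j' with hj0 | hj0
          · refine ⟨0, ?_⟩
            rw [dif_neg (by simp [hkdef, hj0])]
            push_cast; ring
          · obtain ⟨u0, hu0⟩ := ih (j' - 1) (by omega) (by omega)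
            refine ⟨u0, ?_⟩
            rw [dif_pos (show 0 < (k:ℕ) from hj0)]
            have : (⟨(k:ℕ)-1, by omega⟩ : Fin n) = ⟨j'-1, by omega⟩ := rfl
            rw [this, hu0]
        obtain ⟨u0, hu0⟩ := hprev
        obtain ⟨s', hs'⟩ := hdvds
        refine ⟨s' - u0 - 2 * u1, ?_⟩
        have hzk : z k = (((p:ℤ)^m * u1 : ℤ) : ℚ) := by
          rw [show (k : Fin n) = ⟨j', by omega⟩ from rfl, hu1]
        have : z ⟨j'+1, hjj⟩ = (s:ℚ) - (((p:ℤ)^m * u0 : ℤ):ℚ) - 2 * (((p:ℤ)^m * u1 : ℤ):ℚ) := by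
          rw [← hu0, ← hzk]
          linarith [hFFz]
        rw [this, hs']
        push_cast
        ring

  have hdvd' : ∀ j : Fin n, ∃ u : ℤ, z j = (((p:ℤ)^m * u : ℤ) : ℚ) := by
    intro j
    have := hdvd j.val j.isLt
    rwa [Fin.eta] at this
  choose uv huv using hdvd'
  have hzfun : z = (fun i => (((p:ℤ)^m * uv i : ℤ) : ℚ)) := funext fun i => huv i
  have hzL : z ∈ L := by rw [hzfun]; exact intvec_mem hS uv
  have hwwL : (x0 : ℚ) • ww n ∈ L := by
    have h := L.sub_mem hzL hx
    rw [hz] at h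
    rwa [add_sub_cancel_left] at h
  obtain ⟨t0, ht0⟩ := (hT x0).mp hwwL
  refine ⟨-t0, uv, ?_⟩
  have : x = z - (x0:ℚ) • ww n := by
    rw [hz, add_sub_cancel_right]
  rw [this, hzfun]
  have hc : ((-t0 * (p:ℤ)^r : ℤ) : ℚ) = -(x0 : ℚ) := by
    rw [ht0]; push_cast; ring
  rw [hc, neg_smul, ← sub_eq_add_neg]

end CraigAux3

namespace CraigAux4
open CraigAux CraigAux2 CraigAux3

variable {n : ℕ} {p c : ℕ} {L : Submodule ℤ (Fin n → ℚ)}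

def vz (n : ℕ) : Fin n → ℤ :=
  fun j => if (j:ℕ) = n - 1 then 1 else (-1)^(n - (j:ℕ)) * ((j:ℕ)+1)

lemma craigV_cast (j : Fin n) : craigV n j = ((vz n j : ℤ) : ℚ) := by
  simp only [craigV, vz]
  split
  · norm_num
  · push_cast; ring

lemma neg_one_sq_pow (q : ℚ) (k : ℕ) : (-1:ℚ)^k * (-1:ℚ)^k = 1 := by
  rw [← mul_pow]; norm_num

lemma vv_eq (hn : 2 ≤ n) :
    craigV n = ((-1:ℚ)^(n+1)) • ww n + ((n:ℚ)+1) • clE n ⟨n-1, by omega⟩ := by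
  funext j
  simp only [craigV, Pi.add_apply, Pi.smul_apply, smul_eq_mul, ww, clE]
  rcases eq_or_ne (j:ℕ) (n-1) with hj | hj
  · rw [if_pos hj]
    have hjF : j = (⟨n-1, by omega⟩ : Fin n) := Fin.ext hj
    rw [hjF]
    rw [Pi.single_eq_same]
    simp only [hj]
    have e1 : n - 1 + 1 = n := by omega
    rw [e1]
    have e2 : ((n-1 : ℕ) : ℚ) + 1 = (n:ℚ) := by
      have : ((n-1 : ℕ) : ℚ) = (n:ℚ) - 1 := by
        rw [show ((n-1:ℕ):ℚ) = ((n:ℚ) - 1) from by push_cast [show 1 ≤ n by omega]; ring]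
      rw [this]; ring
    rw [e2, pow_succ]
    have := neg_one_sq_pow (1:ℚ) n
    nlinarith [this]
  · rw [if_neg hj]
    have hjF : j ≠ (⟨n-1, by omega⟩ : Fin n) := by
      intro h; exact hj (congrArg Fin.val h)
    rw [Pi.single_eq_of_ne hjF]
    have hle : (j:ℕ) ≤ n := le_of_lt j.isLt
    have e : (-1:ℚ)^(n-(j:ℕ)) * (-1:ℚ)^(j:ℕ) = (-1:ℚ)^n := by
      rw [← pow_add, Nat.sub_add_cancel hle]
    have e2 : (-1:ℚ)^(n-(j:ℕ)) = (-1:ℚ)^n * (-1:ℚ)^(j:ℕ) := by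
      have h3 := neg_one_sq_pow (1:ℚ) (j:ℕ)
      calc (-1:ℚ)^(n-(j:ℕ)) = (-1:ℚ)^(n-(j:ℕ)) * ((-1:ℚ)^(j:ℕ) * (-1:ℚ)^(j:ℕ)) := by
            rw [h3]; ring
        _ = ((-1:ℚ)^(n-(j:ℕ)) * (-1:ℚ)^(j:ℕ)) * (-1:ℚ)^(j:ℕ) := by ring
        _ = (-1:ℚ)^n * (-1:ℚ)^(j:ℕ) := by rw [e]
    rw [e2, pow_succ, pow_succ]
    ring

lemma ww_eq (hn : 2 ≤ n) :
    ww n = ((-1:ℚ)^(n+1)) • craigV n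
      - ((-1:ℚ)^(n+1) * ((n:ℚ)+1)) • clE n ⟨n-1, by omega⟩ := by
  rw [vv_eq hn, smul_add, smul_smul, neg_one_sq_pow 1 (n+1), one_smul, smul_smul]
  abel

lemma zsmul_mem' {N : Submodule ℤ (Fin n → ℚ)} (a : ℤ) {x : Fin n → ℚ} (h : x ∈ N) :
    (a:ℚ) • x ∈ N := by
  rw [Int.cast_smul_eq_zsmul]; exact N.smul_mem a h

theorem classify (hn : 2 ≤ n) (hp : p.Prime)
    (hBase : ∀ k : Fin n, ∀ x ∈ L, (craigA n k).mulVec x ∈ L)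
    (hsub : ∀ x ∈ L, ∀ i, ∃ t : ℤ, x i = (t:ℚ))
    (hpc : ((p:ℚ)^c) • clE n ⟨0, by omega⟩ ∈ L) :
    ∃ a b : ℕ, a + b ≤ c ∧ b ≤ padicValNat p (n+1) ∧
      L = ((p:ℚ)^a) • craigL n (p^b) := by
  obtain ⟨m, hmc, hS⟩ := exists_m hp hBase (by omega) hpc
  obtain ⟨r, hrm, hT⟩ := exists_r hp hBase hS
  have hTr : ((((p:ℤ)^r : ℤ)):ℚ) • ww n ∈ L := (hT _).mpr dvd_rfl
  have hmrv : m ≤ r + padicValNat p (n+1) := m_le_r_add hp hBase hn hS hTr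
  set v := padicValNat p (n+1) with hv
  set b := m - r with hbdef
  have hb : r + b = m := by omega
  have hbv : b ≤ v := by omega
  refine ⟨r, b, by omega, hbv, ?_⟩
  set lastF : Fin n := ⟨n-1, by omega⟩ with hlastF
  set N := craigL n (p^b) with hN
  have genV : craigV n ∈ N := Submodule.subset_span (Set.mem_insert _ _)
  have genE : ∀ j : Fin n, (j:ℕ) < n-1 → (((p^b : ℕ)):ℚ) • clE n j ∈ N := by
    intro j hj
    exact Submodule.subset_span (Set.mem_insert_of_mem _ ⟨j, hj, rfl⟩)
  have pb_last : (((p^b : ℕ)):ℚ) • clE n lastF ∈ N := by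
    have hdec : (((p^b : ℕ)):ℚ) • clE n lastF
        = (((p^b : ℕ) : ℤ) : ℚ) • craigV n
          - ∑ j ∈ Finset.univ.erase lastF, ((vz n j : ℤ):ℚ) • ((((p^b : ℕ)):ℚ) • clE n j) := by
      funext i
      simp only [Pi.sub_apply, Finset.sum_apply, Pi.smul_apply, smul_eq_mul, clE]
      have hsum : ∑ j ∈ Finset.univ.erase lastF,
          ((vz n j : ℤ):ℚ) * (((p^b : ℕ):ℚ) * (Pi.single j (1:ℚ) : Fin n → ℚ) i)
          = if i ∈ Finset.univ.erase lastF then ((vz n i : ℤ):ℚ) * ((p^b : ℕ):ℚ) else 0 := by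
        rw [← Finset.sum_ite_eq (Finset.univ.erase lastF) i
          (fun j => ((vz n j : ℤ):ℚ) * ((p^b : ℕ):ℚ))]
        refine Finset.sum_congr rfl fun j _ => ?_
        rcases eq_or_ne i j with rfl | hij
        · rw [if_pos rfl, Pi.single_eq_same]; ring
        · rw [if_neg hij, Pi.single_eq_of_ne hij]; ring
      rw [hsum]
      rcases eq_or_ne i lastF with rfl | hi
      · rw [if_neg (Finset.notMem_erase _ _), Pi.single_eq_same, craigV_cast]
        have hvz : vz n lastF = 1 := by
          have hival : (lastF:ℕ) = n - 1 := rfl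
          simp only [vz, hival, if_pos]
        rw [hvz]
        push_cast
        ring
      · rw [if_pos (Finset.mem_erase.mpr ⟨hi, Finset.mem_univ i⟩),
          Pi.single_eq_of_ne hi, craigV_cast]
        push_cast
        ring
    rw [hdec]
    refine Submodule.sub_mem N (zsmul_mem' _ genV) (Submodule.sum_mem N fun j hj => ?_)
    have hjlt : (j:ℕ) < n - 1 := by
      have h1 := (Finset.mem_erase.mp hj).1
      have h2 := j.isLt
      have h3 : (j:ℕ) ≠ n - 1 := fun h => h1 (Fin.ext h)
      omega
    exact zsmul_mem' _ (genE j hjlt)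
  -- the auxiliary submodule {y | p^r • y ∈ L}
  set L' : Submodule ℤ (Fin n → ℚ) :=
    { carrier := {y | ((p:ℚ))^r • y ∈ L}
      add_mem' := by
        intro a b ha hb
        simp only [Set.mem_setOf_eq, smul_add] at *
        exact L.add_mem ha hb
      zero_mem' := by
        simp only [Set.mem_setOf_eq, smul_zero]
        exact L.zero_mem
      smul_mem' := by
        intro a y hy
        simp only [Set.mem_setOf_eq] at *
        rw [smul_comm]
        exact L.smul_mem a hy } with hL'
  have hNL' : N ≤ L' := by
    rw [hN, craigL]
    rw [Submodule.span_le]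
    rintro x (rfl | ⟨j, hj, rfl⟩)
    · -- craigV
      show ((p:ℚ))^r • craigV n ∈ L
      rw [vv_eq hn, smul_add, smul_smul, smul_smul]
      refine L.add_mem ?_ ?_
      · have hc : (p:ℚ)^r * (-1)^(n+1) = (((p:ℤ)^r * (-1)^(n+1) : ℤ) : ℚ) := by
          push_cast; ring
        rw [hc]
        exact (hT _).mpr (dvd_mul_right _ _)
      · have hc : (p:ℚ)^r * ((n:ℚ)+1) = (((p:ℤ)^r * ((n:ℤ)+1) : ℤ) : ℚ) := by
          push_cast; ring
        rw [hc]
        refine (hS _ _).mpr ?_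
        have h1 : (p:ℕ)^v ∣ n + 1 := pow_padicValNat_dvd
        have h2 : ((p:ℤ))^v ∣ ((n:ℤ)+1) := by
          have := Int.natCast_dvd_natCast.mpr h1
          push_cast at this
          exact this
        calc ((p:ℤ))^m ∣ ((p:ℤ))^(r+v) := pow_dvd_pow _ (by omega)
          _ = ((p:ℤ))^r * ((p:ℤ))^v := pow_add _ _ _
          _ ∣ ((p:ℤ))^r * ((n:ℤ)+1) := mul_dvd_mul_left _ h2
    · -- scaled singles
      show ((p:ℚ))^r • (((p^b : ℕ)):ℚ) • (Pi.single j (1:ℚ) : Fin n → ℚ) ∈ L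
      rw [smul_smul]
      have hc : (p:ℚ)^r * ((p^b : ℕ):ℚ) = (((p:ℤ)^m : ℤ) : ℚ) := by
        push_cast
        rw [← pow_add, hb]
      rw [hc]
      exact (hS j _).mpr dvd_rfl
  apply le_antisymm
  · -- L ⊆ p^r • N
    intro x hx
    obtain ⟨t, y, hxeq⟩ := decomp hBase hn hS hT hsub hx
    rw [mem_psmul]
    refine ⟨(fun i => (((p:ℤ)^b * y i : ℤ) : ℚ)) + (t:ℚ) • ww n, ?_, ?_⟩
    · refine N.add_mem ?_ ?_
      · rw [eq_sum_singles (fun i => (((p:ℤ)^b * y i : ℤ) : ℚ))]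
        refine Submodule.sum_mem N fun j _ => ?_
        have hc : ((((p:ℤ)^b * y j : ℤ) : ℚ)) • clE n j
            = (y j : ℚ) • ((((p^b : ℕ)):ℚ) • clE n j) := by
          rw [smul_smul]
          congr 1
          push_cast
          ring
        rw [hc]
        rcases Nat.lt_or_ge (j:ℕ) (n-1) with hj | hj
        · exact zsmul_mem' _ (genE j hj)
        · have hjeq : j = lastF := Fin.ext (by
            have h1 := j.isLt
            have h2 : (lastF:ℕ) = n - 1 := rfl
            omega)
          rw [hjeq]
          exact zsmul_mem' _ pb_last
      · rw [ww_eq hn, smul_sub, smul_smul, smul_smul]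
        refine N.sub_mem ?_ ?_
        · have hc : (t:ℚ) * (-1)^(n+1) = ((t * (-1)^(n+1) : ℤ) : ℚ) := by push_cast; ring
          rw [hc]
          exact zsmul_mem' _ genV
        · obtain ⟨u, hu⟩ : ∃ u : ℕ, n + 1 = p^v * u := pow_padicValNat_dvd
          have hc : (t:ℚ) * ((-1)^(n+1) * ((n:ℚ)+1))
              = ((t * (-1)^(n+1) * (u:ℤ) * (p:ℤ)^(v-b) : ℤ) : ℚ) * ((p^b : ℕ):ℚ) := by
            have e2 : ((n:ℚ)+1) = (p:ℚ)^(v-b) * ((p^b:ℕ):ℚ) * (u:ℚ) := by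
              have e3 : ((n:ℚ)+1) = ((p^v * u : ℕ):ℚ) := by rw [← hu]; push_cast; ring
              rw [e3]
              push_cast
              rw [show (p:ℚ)^(v-b) * (p:ℚ)^b = (p:ℚ)^v from by
                rw [← pow_add]; congr 1; omega]
            rw [e2]
            push_cast
            ring
          rw [show ((t:ℚ) * ((-1:ℚ)^(n+1) * ((n:ℚ)+1))) • clE n lastF
              = ((t * (-1)^(n+1) * (u:ℤ) * (p:ℤ)^(v-b) : ℤ) : ℚ) • (((p^b : ℕ):ℚ) • clE n lastF)
            from by rw [smul_smul, ← hc]]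
          exact zsmul_mem' _ pb_last
    · -- p^r • ξ = x
      rw [hxeq, smul_add]
      congr 1
      · funext i
        simp only [Pi.smul_apply, smul_eq_mul]
        push_cast
        rw [show (p:ℚ)^r * ((p:ℚ)^b * (y i : ℚ)) = (p:ℚ)^(r+b) * (y i : ℚ) from by
          rw [pow_add]; ring, hb]
      · rw [smul_smul]
        congr 1
        push_cast
        ring
  · -- p^r • N ⊆ L
    intro ξ hξ
    rw [mem_psmul] at hξ
    obtain ⟨y, hy, rfl⟩ := hξ
    exact hNL' hy

end CraigAux4

namespace CraigFinal
open CraigAux CraigAux2 CraigAux3 CraigAux4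

def IntVec (n : ℕ) : Submodule ℤ (Fin n → ℚ) where
  carrier := {x | ∀ i, ∃ t : ℤ, x i = (t:ℚ)}
  add_mem' := by
    intro a b ha hb i
    obtain ⟨ta, hta⟩ := ha i
    obtain ⟨tb, htb⟩ := hb i
    exact ⟨ta + tb, by rw [Pi.add_apply, hta, htb]; push_cast; ring⟩
  zero_mem' := fun i => ⟨0, by simp⟩
  smul_mem' := by
    intro a x hx i
    obtain ⟨t, ht⟩ := hx i
    exact ⟨a * t, by
      rw [Pi.smul_apply, ht, ← Int.cast_smul_eq_zsmul ℚ, smul_eq_mul]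
      push_cast
      ring⟩

lemma craigL_le_IntVec (n : ℕ) : craigL n 1 ≤ IntVec n := by
  rw [craigL, Submodule.span_le]
  rintro x (rfl | ⟨j, hj, rfl⟩)
  · intro i
    exact ⟨vz n i, craigV_cast i⟩
  · intro i
    rcases eq_or_ne i j with rfl | hij
    · exact ⟨1, by simp⟩
    · exact ⟨0, by simp [Pi.single_eq_of_ne hij]⟩

theorem final (n : ℕ) (hn : 2 ≤ n)
    (ρ : Equiv.Perm (Fin (n + 1)) →* Matrix (Fin n) (Fin n) ℚ)
    (hρ : ∀ k : Fin n, ρ (Equiv.swap k.castSucc k.succ) = craigA n k)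
    (p : ℕ) (hp : p.Prime)
    (L : Submodule ℤ (Fin n → ℚ))
    (hL : L ≤ craigL n 1 ∧ ∀ g : Equiv.Perm (Fin (n + 1)), ∀ x ∈ L, (ρ g).mulVec x ∈ L)
    (c : ℕ) (hc : 1 ≤ c) (hcL : ((p : ℚ) ^ c) • craigL n 1 ≤ L) :
    ∃ a b : ℕ, a + b ≤ c ∧ b ≤ padicValNat p (n + 1) ∧
      L = ((p : ℚ) ^ a) • craigL n (p ^ b) := by
  have hBase : ∀ k : Fin n, ∀ x ∈ L, (craigA n k).mulVec x ∈ L := by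
    intro k x hx
    have h := hL.2 (Equiv.swap k.castSucc k.succ) x hx
    rwa [hρ k] at h
  have hsub : ∀ x ∈ L, ∀ i, ∃ t : ℤ, x i = (t:ℚ) :=
    fun x hx i => craigL_le_IntVec n (hL.1 hx) i
  have hE0 : clE n ⟨0, by omega⟩ ∈ craigL n 1 := by
    apply Submodule.subset_span
    refine Set.mem_insert_of_mem _ ⟨⟨0, by omega⟩, ?_, ?_⟩
    · show (0:ℕ) < n - 1
      omega
    · rw [Nat.cast_one, one_smul]
      rfl
  have hpc : ((p:ℚ)^c) • clE n ⟨0, by omega⟩ ∈ L :=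
    hcL (Submodule.smul_mem_pointwise_smul _ _ _ hE0)
  exact classify hn hp hBase hsub hpc

end CraigFinal


/-- if `L` is a `ℤG`-sublattice of `L(1)` with `p^c·L(1) ⊆ L` for
some `c ≥ 1`, then `L = p^a·L(p^b)` with `a + b ≤ c` and `b ≤ v_p(n+1)`. -/
theorem sublattice_of_L1 (n : ℕ) (hn : 2 ≤ n)
    (ρ : Equiv.Perm (Fin (n + 1)) →* Matrix (Fin n) (Fin n) ℚ)
    (hρ : ∀ k : Fin n, ρ (Equiv.swap k.castSucc k.succ) = craigA n k)
    (p : ℕ) (hp : p.Prime)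
    (L : Submodule ℤ (Fin n → ℚ)) (hL : IsSubl ρ (craigL n 1) L)
    (c : ℕ) (hc : 1 ≤ c) (hcL : ((p : ℚ) ^ c) • craigL n 1 ≤ L) :
    ∃ a b : ℕ, a + b ≤ c ∧ b ≤ padicValNat p (n + 1) ∧
      L = ((p : ℚ) ^ a) • craigL n (p ^ b) := by
  exact CraigFinal.final n hn ρ hρ p hp L ⟨hL.1, hL.2⟩ c hc hcL
end

section
/- Let p be a prime and a, b, a′, b′ ≥ 0 integers. Then p^a·L(p^b) ∩ p^{a′}·L(p^{b′}) = p^{max(a,a′)}·L(p^{max(a+b, a′+b′) − max(a,a′)}) as ℤ-submodules of V. -/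
open Pointwise

/-!
`L(d) = ℤ v ⊕ d E` with `E = ⊕_{i<n} ℤ eᵢ`, so `pᵃ L(pᵇ) = pᵃ ℤ v ⊕ p^(a+b) E`. The line `ℚ v`
meets the hyperplane `xₙ = 0`, which contains every multiple of `E`, only in `0` (as `vₙ = 1`);
hence the intersection of two such lattices is computed separately on the `v`-parts and on the
`E`-parts. On each part the lattices `pᵏ N` form a decreasing chain, so the intersection is the
one with the larger exponent.
-/

namespace Submodule

theorem sup_inf_sup_of_disjoint {R M : Type*} [Ring R] [AddCommGroup M] [Module R M]
    {A E A₁ A₂ E₁ E₂ : Submodule R M} (hAE : Disjoint A E)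
    (hA₁ : A₁ ≤ A) (hA₂ : A₂ ≤ A) (hE₁ : E₁ ≤ E) (hE₂ : E₂ ≤ E) :
    (A₁ ⊔ E₁) ⊓ (A₂ ⊔ E₂) = (A₁ ⊓ A₂) ⊔ (E₁ ⊓ E₂) := by
  refine le_antisymm ?_
    (le_inf (sup_le_sup inf_le_left inf_le_left) (sup_le_sup inf_le_right inf_le_right))
  rintro x ⟨hx₁, hx₂⟩
  obtain ⟨a₁, ha₁, e₁, he₁, rfl⟩ := mem_sup.1 hx₁
  obtain ⟨a₂, ha₂, e₂, he₂, h⟩ := mem_sup.1 hx₂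
  have ha : a₁ = a₂ := by
    refine sub_eq_zero.1 (disjoint_def.1 hAE _ (sub_mem (hA₁ ha₁) (hA₂ ha₂)) ?_)
    rw [show a₁ - a₂ = e₂ - e₁ by rw [sub_eq_sub_iff_add_eq_add, ← h, add_comm]]
    exact sub_mem (hE₂ he₂) (hE₁ he₁)
  have he : e₁ = e₂ := by
    rw [ha] at h
    exact (add_left_cancel h).symm
  exact mem_sup.2 ⟨a₁, ⟨ha₁, ha ▸ ha₂⟩, e₁, ⟨he₁, he ▸ he₂⟩, rfl⟩

variable {S V : Type*} [Ring S] [AddCommGroup V] [Module S V]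

theorem natCast_smul_le_self (m : ℕ) (N : Submodule ℤ V) : (m : S) • N ≤ N := by
  rintro _ ⟨x, hx, rfl⟩
  simpa [Nat.cast_smul_eq_nsmul] using N.nsmul_mem hx m

theorem antitone_natCast_pow_smul (m : ℕ) (N : Submodule ℤ V) :
    Antitone fun k : ℕ => (m : S) ^ k • N := by
  intro k k' h
  dsimp only
  rw [← Nat.add_sub_cancel' h, pow_add, mul_smul]
  exact smul_mono_right _ (by simpa using natCast_smul_le_self (S := S) (m ^ (k' - k)) N)

theorem natCast_pow_smul_inf (m : ℕ) (N : Submodule ℤ V) (k k' : ℕ) :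
    (m : S) ^ k • N ⊓ (m : S) ^ k' • N = (m : S) ^ max k k' • N :=
  ((antitone_natCast_pow_smul m N).map_sup k k').symm

theorem smul_le_restrictScalars (W : Submodule S V) {N : Submodule ℤ V}
    (h : N ≤ W.restrictScalars ℤ) (q : S) : q • N ≤ W.restrictScalars ℤ := by
  rintro _ ⟨x, hx, rfl⟩
  exact W.smul_mem q (h hx)

end Submodule

open Submodule

def craigE (n : ℕ) : Submodule ℤ (Fin n → ℚ) :=
  span ℤ {x | ∃ j : Fin n, (j : ℕ) < n - 1 ∧ x = Pi.single j 1}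

theorem pow_smul_craigL_pow (n p a b : ℕ) :
    (p : ℚ) ^ a • craigL n (p ^ b) =
      (p : ℚ) ^ a • (ℤ ∙ craigV n) ⊔ (p : ℚ) ^ (a + b) • craigE n := by
  have hgen :
      {x | ∃ j : Fin n, (j : ℕ) < n - 1 ∧ x = ((p ^ b : ℕ) : ℚ) • (Pi.single j 1 : Fin n → ℚ)} =
        (p : ℚ) ^ b • {x | ∃ j : Fin n, (j : ℕ) < n - 1 ∧ x = Pi.single j 1} := by
    ext x
    simp [Set.mem_smul_set, eq_comm]
  rw [craigL, span_insert, hgen, ← smul_span, smul_sup', ← mul_smul, ← pow_add, craigE]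

section

variable {n : ℕ} (hn : 0 < n)
include hn

theorem craigV_last : craigV n ⟨n - 1, by omega⟩ = 1 := by
  simp [craigV]

theorem disjoint_span_craigV_ker_proj :
    Disjoint ((ℚ ∙ craigV n).restrictScalars ℤ)
      ((LinearMap.ker
        (LinearMap.proj ⟨n - 1, by omega⟩ : (Fin n → ℚ) →ₗ[ℚ] ℚ)).restrictScalars ℤ) := by
  rw [disjoint_def]
  rintro x hv hker
  obtain ⟨c, rfl⟩ := mem_span_singleton.1 hv
  simp_all [craigV_last hn]

theorem craigE_le_ker_proj :
    craigE n ≤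
      (LinearMap.ker
        (LinearMap.proj ⟨n - 1, by omega⟩ : (Fin n → ℚ) →ₗ[ℚ] ℚ)).restrictScalars ℤ := by
  refine span_le.2 ?_
  rintro _ ⟨j, hj, rfl⟩
  have hj : j ≠ ⟨n - 1, by omega⟩ := fun h => by simp [h] at hj
  simp [hj.symm]

end

theorem inter_of_scaled_L_general (n : ℕ) (hn : 2 ≤ n)
    (p : ℕ) (a b a' b' : ℕ) :
    (((p : ℚ) ^ a) • craigL n (p ^ b)) ⊓ (((p : ℚ) ^ a') • craigL n (p ^ b'))
      = ((p : ℚ) ^ (max a a')) •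
          craigL n (p ^ (max (a + b) (a' + b') - max a a')) := by
  have hn₀ : 0 < n := by omega
  have hA (k : ℕ) :=
    smul_le_restrictScalars _ (span_le_restrictScalars ℤ ℚ {craigV n}) ((p : ℚ) ^ k)
  have hE (k : ℕ) := smul_le_restrictScalars _ (craigE_le_ker_proj hn₀) ((p : ℚ) ^ k)
  rw [pow_smul_craigL_pow, pow_smul_craigL_pow, pow_smul_craigL_pow,
    Nat.add_sub_cancel' (max_le_max (Nat.le_add_right a b) (Nat.le_add_right a' b')),
    sup_inf_sup_of_disjoint (disjoint_span_craigV_ker_proj hn₀) (hA a) (hA a') (hE _) (hE _),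
    natCast_pow_smul_inf, natCast_pow_smul_inf]

/-- Lemma 2(1): `p^a·L(p^b) ∩ p^{a'}·L(p^{b'})
= p^{max(a,a')}·L(p^{max(a+b,a'+b') - max(a,a')})`. -/
theorem inter_of_scaled_L (n : ℕ) (hn : 2 ≤ n)
    (p : ℕ) (hp : p.Prime) (a b a' b' : ℕ) :
    (((p : ℚ) ^ a) • craigL n (p ^ b)) ⊓ (((p : ℚ) ^ a') • craigL n (p ^ b'))
      = ((p : ℚ) ^ (max a a')) •
          craigL n (p ^ (max (a + b) (a' + b') - max a a')) :=
  inter_of_scaled_L_general n hn p a b a' b'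
end

section
/- Let p be a prime and a, b, a′, b′ ≥ 0 integers. Then p^a·L(p^b) ⊆ p^{a′}·L(p^{b′}) holds if and only if a ≥ a′ and a + b ≥ a′ + b′; and in that case the index satisfies |p^{a′}·L(p^{b′}) : p^a·L(p^b)| = p^{(a−a′)n + (b−b′)(n−1)}. -/
open Pointwise

/-!
The linear map `T` fixing `e_1, …, e_{n-1}` and sending `e_n` to `v` is invertible (as `v_n = 1`)
and carries the diagonal lattice `⊕ ℤ·w_i·e_i` with `w = q·(d, …, d, 1)` onto `q·L(d)`. Hence
inclusion and index of the lattices `p^a·L(p^b)` are those of diagonal lattices, where they are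
read off coordinatewise: `p^{a+b}ℤ ⊆ p^{a'+b'}ℤ` in the first `n - 1` coordinates and
`p^aℤ ⊆ p^{a'}ℤ` in the last one, with indices `p^{a+b-a'-b'}` and `p^{a-a'}`.
-/

namespace AddSubgroup

variable {ι M : Type*} [AddCommGroup M]

def zmultiplesPi (w : ι → M) : AddSubgroup (ι → M) :=
  pi Set.univ fun i => zmultiples (w i)

def zsmulPi (w : ι → M) : (ι → ℤ) →+ (ι → M) :=
  AddMonoidHom.pi fun i => (zmultiplesHom M (w i)).comp (Pi.evalAddMonoidHom _ i)

@[simp] lemma zsmulPi_apply (w : ι → M) (c : ι → ℤ) (i : ι) : zsmulPi w c i = c i • w i := rfl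

lemma range_zsmulPi (w : ι → M) : (zsmulPi w).range = zmultiplesPi w := by
  ext x
  simp only [AddMonoidHom.mem_range, zmultiplesPi, mem_pi, Set.mem_univ, true_implies,
    mem_zmultiples_iff, funext_iff, zsmulPi_apply]
  exact ⟨fun ⟨c, hc⟩ i => ⟨c i, hc i⟩, fun h => Classical.skolem.mp h⟩

lemma zmultiplesPi_le_zmultiplesPi_iff {w w' : ι → M} :
    zmultiplesPi w ≤ zmultiplesPi w' ↔ ∀ i, w i ∈ zmultiples (w' i) := by
  classical
  refine ⟨fun h i => ?_, fun h x hx i _ => zmultiples_le.mpr (h i) (hx i trivial)⟩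
  have hsingle : Pi.single i (w i) ∈ zmultiplesPi w := fun j _ => by
    rcases eq_or_ne j i with rfl | hj
    · simp [mem_zmultiples]
    · simp [hj, zero_mem]
  simpa using h hsingle i trivial

lemma comap_zsmulPi_zmultiplesPi [IsAddTorsionFree M] {w : ι → M} (hw : ∀ i, w i ≠ 0)
    (k : ι → ℤ) :
    (zmultiplesPi (k • w)).comap (zsmulPi w) = pi Set.univ fun i => zmultiples (k i) := by
  ext c
  simp only [mem_comap, zmultiplesPi, mem_pi, Set.mem_univ, true_implies, mem_zmultiples_iff,
    zsmulPi_apply, Pi.smul_apply', smul_smul]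
  refine forall_congr' fun i => exists_congr fun z => ?_
  exact (smul_left_injective ℤ (hw i)).eq_iff

lemma relIndex_zmultiplesPi_smul [Fintype ι] [IsAddTorsionFree M] {w : ι → M}
    (hw : ∀ i, w i ≠ 0) (k : ι → ℤ) :
    (zmultiplesPi (k • w)).relIndex (zmultiplesPi w) = ∏ i, (k i).natAbs := by
  rw [← range_zsmulPi w, AddMonoidHom.range_eq_map, ← relIndex_comap, relIndex_top_right,
    comap_zsmulPi_zmultiplesPi hw, index_pi]
  simp [Int.index_zmultiples]

end AddSubgroup

lemma natCast_pow_mem_zmultiples_iff {p : ℕ} (hp : 1 < p) {a a' : ℕ} :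
    (p : ℚ) ^ a ∈ AddSubgroup.zmultiples ((p : ℚ) ^ a') ↔ a' ≤ a := by
  rw [AddSubgroup.mem_zmultiples_iff]
  refine ⟨fun ⟨k, hk⟩ => ?_, fun h => ⟨(p : ℤ) ^ (a - a'), ?_⟩⟩
  · have hkZ : k * (p : ℤ) ^ a' = (p : ℤ) ^ a := by
      rw [zsmul_eq_mul] at hk
      exact_mod_cast hk
    have hdvd : p ^ a' ∣ p ^ a := by exact_mod_cast Dvd.intro_left k hkZ
    exact (Nat.pow_dvd_pow_iff_le_right hp).mp hdvd
  · rw [zsmul_eq_mul]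
    push_cast
    exact pow_sub_mul_pow _ h

section Craig

variable (m : ℕ)

lemma craigV_last_s7 : craigV (m + 1) (Fin.last m) = 1 := by
  simp [craigV]

def craigT : (Fin (m + 1) → ℚ) →ₗ[ℚ] (Fin (m + 1) → ℚ) :=
  LinearMap.id +
    (LinearMap.proj (Fin.last m)).smulRight (craigV (m + 1) - Pi.single (Fin.last m) 1)

lemma craigT_apply (x : Fin (m + 1) → ℚ) :
    craigT m x = x + x (Fin.last m) • (craigV (m + 1) - Pi.single (Fin.last m) 1) :=
  rfl

lemma craigT_apply_last (x : Fin (m + 1) → ℚ) : craigT m x (Fin.last m) = x (Fin.last m) := by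
  simp [craigT_apply, craigV_last_s7]

lemma craigT_injective : Function.Injective (craigT m) := by
  refine (injective_iff_map_eq_zero _).mpr fun x hx => ?_
  have hlast : x (Fin.last m) = 0 := by rw [← craigT_apply_last m x, hx, Pi.zero_apply]
  simpa [craigT_apply, hlast] using hx

def craigWeight (d : ℕ) : Fin (m + 1) → ℚ := fun i => if i = Fin.last m then 1 else d

lemma craigL_eq_span_range (d : ℕ) :
    craigL (m + 1) d =
      Submodule.span ℤ (Set.range fun i => craigT m (Pi.single i (craigWeight m d i))) := by
  have hlast :
      craigT m (Pi.single (Fin.last m) (craigWeight m d (Fin.last m))) = craigV (m + 1) := by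
    simp [craigT_apply, craigWeight]
  have hsingle (i : Fin (m + 1)) (hi : i ≠ Fin.last m) :
      craigT m (Pi.single i (craigWeight m d i)) = (d : ℚ) • Pi.single i 1 := by
    ext j
    simp [craigT_apply, craigWeight, hi, Pi.single_apply]
  unfold craigL
  congr 1
  ext x
  constructor
  · rintro (rfl | ⟨j, hj, rfl⟩)
    · exact ⟨_, hlast⟩
    · exact ⟨j, hsingle j (by simpa [Fin.ext_iff] using hj.ne)⟩
  · rintro ⟨i, rfl⟩
    by_cases hi : i = Fin.last m
    · exact Or.inl (hi ▸ hlast)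
    · exact Or.inr ⟨i, by simpa using Fin.val_lt_last hi, hsingle i hi⟩

lemma smul_craigL_toAddSubgroup (q : ℚ) (d : ℕ) :
    (q • craigL (m + 1) d).toAddSubgroup =
      (AddSubgroup.zmultiplesPi (q • craigWeight m d)).map (craigT m).toAddMonoidHom := by
  rw [craigL_eq_span_range, Submodule.smul_span, Set.smul_set_range, ← AddSubgroup.range_zsmulPi]
  ext x
  simp only [Submodule.mem_toAddSubgroup, Submodule.mem_span_range_iff_exists_fun,
    AddSubgroup.mem_map, AddMonoidHom.mem_range, exists_exists_eq_and]
  refine exists_congr fun c => Eq.congr_left ?_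
  classical
  simp only [← map_smul, ← map_zsmul, ← map_sum, ← Pi.single_smul, LinearMap.sum_single_apply]
  rfl

lemma smul_craigL_pow_le_iff {p : ℕ} (hp : 1 < p) {a b a' b' : ℕ} :
    (p : ℚ) ^ a • craigL (m + 1 + 1) (p ^ b) ≤ (p : ℚ) ^ a' • craigL (m + 1 + 1) (p ^ b') ↔
      a' ≤ a ∧ a' + b' ≤ a + b := by
  rw [← Submodule.toAddSubgroup_le, smul_craigL_toAddSubgroup, smul_craigL_toAddSubgroup,
    AddSubgroup.map_le_map_iff_of_injective (craigT_injective _),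
    AddSubgroup.zmultiplesPi_le_zmultiplesPi_iff, Fin.forall_fin_succ']
  simp [craigWeight, Fin.castSucc_ne_last, ← pow_add, natCast_pow_mem_zmultiples_iff hp, and_comm]

lemma subIndex_smul_craigL_pow {p : ℕ} (hp : p ≠ 0) {a b a' b' : ℕ} (h1 : a' ≤ a)
    (h2 : a' + b' ≤ a + b) :
    subIndex ((p : ℚ) ^ a • craigL (m + 1) (p ^ b)) ((p : ℚ) ^ a' • craigL (m + 1) (p ^ b')) =
      p ^ ((a + b - (a' + b')) * m) * p ^ (a - a') := by
  set k : Fin (m + 1) → ℤ := fun i =>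
    if i = Fin.last m then (p : ℤ) ^ (a - a') else (p : ℤ) ^ (a + b - (a' + b'))
  have hk : (p : ℚ) ^ a • craigWeight m (p ^ b) = k • ((p : ℚ) ^ a' • craigWeight m (p ^ b')) := by
    funext i
    by_cases hi : i = Fin.last m
    · simp [k, craigWeight, hi, pow_sub_mul_pow _ h1]
    · simp [k, craigWeight, hi, ← pow_add, pow_sub_mul_pow _ h2]
  have hw : ∀ i, ((p : ℚ) ^ a' • craigWeight m (p ^ b')) i ≠ 0 := fun i => by
    by_cases hi : i = Fin.last m <;> simp [craigWeight, hi, hp]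
  rw [subIndex, smul_craigL_toAddSubgroup, smul_craigL_toAddSubgroup,
    AddSubgroup.relIndex_map_map_of_injective _ _ (craigT_injective m), hk,
    AddSubgroup.relIndex_zmultiplesPi_smul hw, Fin.prod_univ_castSucc]
  simp [k, Fin.castSucc_ne_last, Int.natAbs_pow, pow_mul]

end Craig

/-- Lemma 2(2): `p^a·L(p^b) ⊆ p^{a'}·L(p^{b'})` iff `a ≥ a'` and
`a+b ≥ a'+b'`; and in that case
`|p^{a'}·L(p^{b'}) : p^a·L(p^b)| = p^{(a-a')n + (b-b')(n-1)}`
(the exponent being an integer, a priori in `ℤ`). -/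
theorem subset_and_index_of_scaled_L (n : ℕ) (hn : 2 ≤ n)
    (p : ℕ) (hp : p.Prime) (a b a' b' : ℕ) :
    ((((p : ℚ) ^ a) • craigL n (p ^ b) ≤ ((p : ℚ) ^ a') • craigL n (p ^ b')) ↔
      (a' ≤ a ∧ a' + b' ≤ a + b)) ∧
    (a' ≤ a → a' + b' ≤ a + b →
      ((subIndex (((p : ℚ) ^ a) • craigL n (p ^ b))
          (((p : ℚ) ^ a') • craigL n (p ^ b')) : ℚ))
        = (p : ℚ) ^ (((a : ℤ) - a') * n + ((b : ℤ) - b') * (n - 1))) := by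
  obtain ⟨m, rfl⟩ : ∃ m, n = m + 1 + 1 := ⟨n - 2, by omega⟩
  refine ⟨smul_craigL_pow_le_iff m hp.one_lt, fun h1 h2 => ?_⟩
  have hexp : ((a : ℤ) - a') * ↑(m + 1 + 1) + ((b : ℤ) - b') * (↑(m + 1 + 1) - 1) =
      (((a + b - (a' + b')) * (m + 1) + (a - a') : ℕ) : ℤ) := by
    push_cast [Nat.cast_sub h1, Nat.cast_sub h2]
    ring
  rw [subIndex_smul_craigL_pow (m + 1) hp.ne_zero h1 h2, hexp, zpow_natCast, pow_add]
  norm_cast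
end

section
/- Let p be a prime dividing n+1, let 0 ≤ i ≤ v_p(n+1), and let L be a proper ℤG-sublattice of L(p^i) whose index |L(p^i) : L| is a finite power of p. Then: (1) if i = 0, then L ⊆ L(p); (2) if 0 < i < v_p(n+1), then L ⊆ L(p^{i+1}) or L ⊆ p·L(p^{i−1}); (3) if i = v_p(n+1), then L ⊆ p·L(p^{v_p(n+1)−1}). -/
open Pointwise

/-!
Put `N = L + p·L(d)` with `d = p^i` and `e = (n+1)/d`. Since `d ∣ n+1`, `L(d)` and hence `N` are
`G`-invariant. Each `A_k + 1` has rank one: `(A_k + 1) y = (y_{k-1} + 2 y_k + y_{k+1}) e_k`.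
In particular `A_k + 1` maps `e_j` to `e_k` when `j` and `k` are adjacent, so as soon as `N`
contains `d r e_k` for one `k` and one `r` prime to `p`, it contains every `d e_j`. Writing
`y = t v + Σ_j c_j d e_j ∈ L(d)`, the numbers `(y_{k-1} + 2 y_k + y_{k+1}) / d` are the entries of
a unimodular integer matrix applied to `(c, e t)`; so one of them is prime to `p` unless
`c ≡ 0` and `e t ≡ 0 (mod p)`. If the claimed containments fail, `L` contains such a `y`, and
also an element with `t` prime to `p`, which puts `v` into `N`. Then `N = L(d)`, i.e.
`L + p L(d) = L(d)`; as `p^k L(d) ⊆ L` for some `k`, iterating gives `L = L(d)`, contradicting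
properness.
-/

section IntSubmodule

variable {V : Type*} [AddCommGroup V]

theorem Submodule.mem_of_smul_mem_of_isCoprime {N : Submodule ℤ V} {x : V} {r q : ℤ}
    (hrq : IsCoprime r q) (hr : r • x ∈ N) (hq : q • x ∈ N) : x ∈ N := by
  obtain ⟨u, w, h⟩ := hrq
  have hx : x = u • r • x + w • q • x := by rw [smul_smul, smul_smul, ← add_smul, h, one_smul]
  rw [hx]
  exact N.add_mem (N.smul_mem u hr) (N.smul_mem w hq)

theorem Submodule.eq_of_le_sup_smul_of_pow_smul_mem {N M : Submodule ℤ V} {a : ℤ} {k : ℕ}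
    (hNM : N ≤ M) (hM : M ≤ N ⊔ a • M) (hk : ∀ x ∈ M, a ^ k • x ∈ N) : N = M := by
  have key : ∀ j : ℕ, ∀ x ∈ M, ∃ y ∈ N, ∃ z ∈ M, x = y + a ^ j • z := by
    intro j
    induction j with
    | zero => exact fun x hx => ⟨0, N.zero_mem, x, hx, by simp⟩
    | succ j ih =>
      intro x hx
      obtain ⟨y, hy, z, hz, rfl⟩ := ih x hx
      obtain ⟨y', hy', w, hw, rfl⟩ := Submodule.mem_sup.mp (hM hz)
      obtain ⟨z', hz', rfl⟩ := (Submodule.mem_smul_pointwise_iff_exists _ _ _).mp hw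
      refine ⟨y + a ^ j • y', N.add_mem hy (N.smul_mem _ hy'), z', hz', ?_⟩
      rw [smul_add, smul_smul, ← pow_succ, add_assoc]
  refine le_antisymm hNM fun x hx => ?_
  obtain ⟨y, hy, z, hz, rfl⟩ := key k x hx
  exact N.add_mem hy (hk z hz)

end IntSubmodule

open Matrix

namespace CraigLattice

section Recurrence

variable {R : Type*} [CommRing R] {m : ℕ} {P : ℕ → R}

theorem eq_neg_one_pow_mul_of_recurrence (h0 : P 0 = 0)
    (hrec : ∀ k ≤ m, P k + 2 * P (k + 1) + P (k + 2) = 0) {i : ℕ} (hi : i ≤ m + 2) :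
    P i = (-1) ^ (i + 1) * i * P 1 := by
  suffices ∀ i ≤ m + 1,
      P i = (-1) ^ (i + 1) * i * P 1 ∧ P (i + 1) = (-1) ^ (i + 2) * (i + 1) * P 1 by
    rcases i with _ | i
    · exact (this 0 (by omega)).1
    · rw [(this i (by omega)).2]
      push_cast
      ring
  intro i
  induction i with
  | zero => exact fun _ => ⟨by simp [h0], by simp⟩
  | succ i ih =>
    intro hi
    obtain ⟨h1, h2⟩ := ih (by omega)
    refine ⟨by simpa using h2, ?_⟩
    push_cast at h2 ⊢
    linear_combination hrec i (by omega) - h1 - 2 * h2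

/-- Equivalently, the `(m + 2) × (m + 2)` matrix with rows `(…, 1, 2, 1, …)` and last row
`(0, …, 0, 1, 1)` is invertible over every commutative ring. -/
theorem eq_zero_of_recurrence (h0 : P 0 = 0)
    (hrec : ∀ k ≤ m, P k + 2 * P (k + 1) + P (k + 2) = 0) (hlast : P (m + 1) + P (m + 2) = 0)
    {i : ℕ} (hi : i ≤ m + 2) : P i = 0 := by
  have hsq : ((-1 : R) ^ m) ^ 2 = 1 := by rw [← pow_mul, mul_comm, pow_mul, neg_one_sq, one_pow]
  rw [eq_neg_one_pow_mul_of_recurrence h0 hrec (by omega),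
    eq_neg_one_pow_mul_of_recurrence h0 hrec le_rfl] at hlast
  have h1 : P 1 = 0 := by
    push_cast at hlast
    linear_combination (-(-1) ^ m) * hlast - P 1 * hsq
  rw [eq_neg_one_pow_mul_of_recurrence h0 hrec hi, h1, mul_zero]

end Recurrence

section Action

variable {R : Type*} [CommRing R] {n : ℕ}

/-- Indices shifted up by one and extended by zero, so that the neighbours `k - 1`, `k + 1` of
`k : Fin n` are read off at `k`, `k + 2` without truncated subtraction or bound checks. -/
def padded (y : Fin n → R) (i : ℕ) : R :=
  if h : i ≠ 0 ∧ i ≤ n then y ⟨i - 1, by omega⟩ else 0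

def neighborSum (y : Fin n → R) (k : ℕ) : R :=
  padded y k + 2 * padded y (k + 1) + padded y (k + 2)

theorem padded_succ (y : Fin n → R) (j : Fin n) : padded y (j + 1) = y j := by
  simp [padded]

theorem padded_of_lt (y : Fin n → R) {i : ℕ} (hi : n < i) : padded y i = 0 :=
  dif_neg (by omega)

theorem padded_last (y : Fin (n + 1) → R) : padded y (n + 1) = y (Fin.last n) := by
  simp [padded, Fin.last]

theorem padded_single (j : Fin n) (x : R) (a : ℕ) :
    padded (Pi.single j x) a = if a = j + 1 then x else 0 := by
  unfold padded
  split_ifs with h h'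
  · subst h'
    simp
  · rw [Pi.single_apply, if_neg]
    rintro rfl
    exact h' (by rw [Fin.val_mk]; omega)
  · omega
  · rfl

theorem sum_ite_val_add_one_eq (y : Fin n → R) (a : ℕ) :
    ∑ j : Fin n, (if (j : ℕ) + 1 = a then y j else 0) = padded y a := by
  unfold padded
  split_ifs with h
  · have key : ∀ j : Fin n, (j : ℕ) + 1 = a ↔ j = ⟨a - 1, by omega⟩ := fun j => by
      rw [Fin.ext_iff]
      change _ ↔ (j : ℕ) = a - 1
      omega
    simp_rw [key, Finset.sum_ite_eq', Finset.mem_univ, if_true]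
  · exact Finset.sum_eq_zero fun j _ => if_neg (by omega)

theorem craigA_mulVec_add_self (y : Fin n → ℚ) (k : Fin n) :
    craigA n k *ᵥ y + y = Pi.single k (neighborSum y k) := by
  ext i
  by_cases hik : i = k
  · subst hik
    simp only [Pi.add_apply, mulVec, dotProduct, craigA, of_apply, true_and, sub_mul, add_mul,
      ite_mul, one_mul, zero_mul, Finset.sum_sub_distrib, Finset.sum_add_distrib,
      Pi.single_eq_same, neighborSum, ← sum_ite_val_add_one_eq]
    simp [Fin.val_inj]
  · have hik' : (i : ℕ) ≠ k := Fin.val_ne_of_ne hik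
    simp [mulVec, dotProduct, craigA, hik, hik']

variable {N : Submodule ℤ (Fin n → ℚ)} (hN : ∀ k, ∀ x ∈ N, craigA n k *ᵥ x ∈ N)
include hN

theorem single_neighborSum_mem {y : Fin n → ℚ} (hy : y ∈ N) (k : Fin n) :
    Pi.single k (neighborSum y k) ∈ N := by
  rw [← craigA_mulVec_add_self]
  exact N.add_mem (hN k y hy) hy

theorem single_mem_iff_of_succ_eq {i j : Fin n} (hij : (i : ℕ) + 1 = j) (x : ℚ) :
    Pi.single i x ∈ N ↔ Pi.single j x ∈ N := by
  constructor <;> intro h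
  · simpa [neighborSum, padded_single, hij] using single_neighborSum_mem hN h j
  · simpa [neighborSum, padded_single, ← hij, show (i : ℕ) ≠ i + 1 + 1 by omega]
      using single_neighborSum_mem hN h i

theorem single_mem_of_single_mem {x : ℚ} {k : Fin n} (hk : Pi.single k x ∈ N) (j : Fin n) :
    Pi.single j x ∈ N := by
  have hn : 0 < n := k.pos
  have key : ∀ a (ha : a < n), Pi.single ⟨a, ha⟩ x ∈ N ↔ Pi.single ⟨0, hn⟩ x ∈ N := by
    intro a
    induction a with
    | zero => exact fun _ => Iff.rfl
    | succ a ih =>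
      exact fun ha => (single_mem_iff_of_succ_eq hN rfl x).symm.trans (ih (by omega))
  exact (key j j.isLt).2 ((key k k.isLt).1 hk)

end Action

section Coordinates

variable {R : Type*} [CommRing R] {m d : ℕ}

def craigVInt (m : ℕ) (j : Fin (m + 1)) : ℤ := (-1) ^ (m + 2 - (j : ℕ)) * ((j : ℕ) + 1)

theorem craigV_castSucc (j : Fin (m + 1)) : craigV (m + 2) j.castSucc = craigVInt m j := by
  have : (j : ℕ) ≠ m + 1 := by omega
  simp [craigV, craigVInt, this]

theorem craigV_last : craigV (m + 2) (Fin.last (m + 1)) = 1 := by simp [craigV]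

theorem craigVInt_last : craigVInt m (Fin.last m) = m + 1 := by
  simp [craigVInt, show m + 2 - m = 2 by omega]

theorem padded_craigVInt {i : ℕ} (hi : i ≤ m + 1) :
    padded (craigVInt m) i = (-1) ^ (m + 3 - i) * i := by
  unfold padded craigVInt
  split_ifs with h
  · obtain ⟨j, rfl⟩ : ∃ j, i = j + 1 := ⟨i - 1, by omega⟩
    rw [show m + 2 - (j + 1 - 1) = m + 3 - (j + 1) by omega]
    push_cast
    simp
  · simp [show i = 0 by omega]

def latticeVec (m d : ℕ) (c : Fin (m + 1) → ℤ) (t : ℤ) : Fin (m + 2) → ℚ :=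
  t • craigV (m + 2) + ∑ j, c j • Pi.single j.castSucc (d : ℚ)

variable {c : Fin (m + 1) → ℤ} {t : ℤ}

@[simp]
theorem latticeVec_castSucc (j : Fin (m + 1)) :
    latticeVec m d c t j.castSucc = t * craigVInt m j + d * c j := by
  simp [latticeVec, craigV_castSucc, Pi.single_apply, mul_comm]

@[simp]
theorem latticeVec_last : latticeVec m d c t (Fin.last (m + 1)) = t := by
  simp [latticeVec, craigV_last]

theorem mem_craigL_iff {x : Fin (m + 2) → ℚ} :
    x ∈ craigL (m + 2) d ↔ ∃ c t, latticeVec m d c t = x := by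
  have hgen : {x | ∃ j : Fin (m + 2), (j : ℕ) < m + 2 - 1 ∧ x = (d : ℚ) • Pi.single j 1}
      = Set.range fun j : Fin (m + 1) => Pi.single j.castSucc (d : ℚ) := by
    ext x
    simp only [Set.mem_ofPred_eq, Set.mem_range]
    constructor
    · rintro ⟨j, hj, rfl⟩
      exact ⟨⟨j, by omega⟩, by rw [← Pi.single_smul', smul_eq_mul, mul_one]; rfl⟩
    · rintro ⟨j, rfl⟩
      exact ⟨j.castSucc, by simp only [Fin.val_castSucc]; omega,
        by rw [← Pi.single_smul', smul_eq_mul, mul_one]⟩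
  rw [craigL, hgen, Submodule.mem_span_insert]
  simp_rw [Submodule.mem_span_range_iff_exists_fun]
  constructor
  · rintro ⟨t, _, ⟨c, rfl⟩, rfl⟩
    exact ⟨c, t, rfl⟩
  · rintro ⟨c, t, rfl⟩
    exact ⟨t, _, ⟨c, rfl⟩, rfl⟩

theorem latticeVec_mem_craigL : latticeVec m d c t ∈ craigL (m + 2) d :=
  mem_craigL_iff.2 ⟨c, t, rfl⟩

theorem latticeVec_natCast_smul (p : ℕ) :
    latticeVec m d ((p : ℤ) • c) t = latticeVec m (p * d) c t := by
  ext j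
  induction j using Fin.lastCases with
  | last => simp
  | cast j =>
    simp only [latticeVec_castSucc, Pi.smul_apply, smul_eq_mul]
    push_cast
    ring

theorem natCast_smul_latticeVec (p : ℕ) :
    (p : ℚ) • latticeVec m d c t = latticeVec m (p * d) c (p * t) := by
  ext j
  induction j using Fin.lastCases with
  | last => simp
  | cast j =>
    simp only [Pi.smul_apply, latticeVec_castSucc, smul_eq_mul]
    push_cast
    ring

theorem latticeVec_neg_craigVInt :
    latticeVec m d (-craigVInt m) d = Pi.single (Fin.last (m + 1)) (d : ℚ) := by
  ext j
  induction j using Fin.lastCases <;> simp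

theorem single_mem_craigL (k : Fin (m + 2)) : Pi.single k (d : ℚ) ∈ craigL (m + 2) d := by
  rw [mem_craigL_iff]
  induction k using Fin.lastCases with
  | last => exact ⟨_, _, latticeVec_neg_craigVInt⟩
  | cast j =>
    exact ⟨Pi.single j 1, 0, by
      ext i; induction i using Fin.lastCases <;> simp [Pi.single_apply]⟩

theorem padded_castSucc (y : Fin (m + 2) → R) {i : ℕ} (hi : i ≤ m + 1) :
    padded y i = padded (fun j : Fin (m + 1) => y j.castSucc) i := by
  unfold padded
  split_ifs <;> first | rfl | omega

theorem padded_snoc (y : Fin (m + 1) → R) (x : R) {i : ℕ} (hi : i ≤ m + 1) :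
    padded (Fin.snoc y x : Fin (m + 2) → R) i = padded y i := by
  rw [padded_castSucc _ hi]
  simp

theorem padded_latticeVec {i : ℕ} (hi : i ≤ m + 1) :
    padded (latticeVec m d c t) i = t * padded (craigVInt m) i + d * padded c i := by
  rw [padded_castSucc _ hi]
  unfold padded
  split_ifs
  · simp only [latticeVec_castSucc]
  · simp

/- In the coordinates `(c, e t)` each `A_k + 1` acts on `L(d)` as `d` times the matrix of
`eq_zero_of_recurrence`, because `v_{k-1} + 2 v_k + v_{k+1}` is `0` for `k < m` and
`m + 3 = d e` for `k = m, m + 1`. -/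

theorem neighborSum_latticeVec {e : ℕ} (hde : d * e = m + 3) {k : ℕ} (hk : k ≤ m) :
    neighborSum (latticeVec m d c t) k
      = d * neighborSum (Fin.snoc c (e * t) : Fin (m + 2) → ℤ) k := by
  have hde' : (d : ℚ) * e = m + 3 := by exact_mod_cast hde
  rcases hk.lt_or_eq with hk | rfl
  · simp (disch := omega) only [neighborSum, padded_latticeVec, padded_snoc, padded_craigVInt]
    rw [show m + 3 - k = m + 1 - k + 2 by omega, show m + 3 - (k + 1) = m + 1 - k + 1 by omega,
      show m + 3 - (k + 2) = m + 1 - k by omega]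
    push_cast
    ring
  · simp (disch := omega) only [neighborSum, padded_latticeVec, padded_last, latticeVec_last,
      Fin.snoc_last, padded_snoc, padded_craigVInt, craigVInt_last]
    rw [show k + 3 - k = 3 by omega]
    push_cast
    linear_combination (t : ℚ) * hde'.symm

theorem neighborSum_latticeVec_last {e : ℕ} (hde : d * e = m + 3) :
    neighborSum (latticeVec m d c t) (m + 1) = d * (c (Fin.last m) + e * t) := by
  have hde' : (d : ℚ) * e = m + 3 := by exact_mod_cast hde
  simp only [neighborSum, padded_latticeVec le_rfl, padded_last, latticeVec_last,
    padded_of_lt _ (show m + 2 < m + 1 + 2 by omega), craigVInt_last]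
  push_cast
  linear_combination (t : ℚ) * hde'.symm

theorem craigA_mulVec_mem_craigL {e : ℕ} (hde : d * e = m + 3) (k : Fin (m + 2))
    {y : Fin (m + 2) → ℚ} (hy : y ∈ craigL (m + 2) d) :
    craigA (m + 2) k *ᵥ y ∈ craigL (m + 2) d := by
  obtain ⟨c, t, rfl⟩ := mem_craigL_iff.1 hy
  obtain ⟨r, hr⟩ : ∃ r : ℤ, neighborSum (latticeVec m d c t) k = d * r := by
    induction k using Fin.lastCases with
    | last =>
      exact ⟨c (Fin.last m) + e * t, by
        rw [Fin.val_last, neighborSum_latticeVec_last hde]; push_cast; ring⟩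
    | cast j => exact ⟨_, neighborSum_latticeVec hde (Nat.lt_succ_iff.1 j.isLt)⟩
  have hA : craigA (m + 2) k *ᵥ latticeVec m d c t
      = r • Pi.single k (d : ℚ) - latticeVec m d c t := by
    rw [eq_sub_iff_add_eq, craigA_mulVec_add_self, hr, ← Pi.single_smul', zsmul_eq_mul, mul_comm]
  rw [hA]
  exact sub_mem (Submodule.smul_mem _ _ (single_mem_craigL k)) hy

end Coordinates

section Sublattice

variable {m d e p : ℕ} {N L : Submodule ℤ (Fin (m + 2) → ℚ)}

theorem exists_single_mem_of_not_dvd (hde : d * e = m + 3)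
    (hN : ∀ k, ∀ x ∈ N, craigA (m + 2) k *ᵥ x ∈ N) {c : Fin (m + 1) → ℤ} {t : ℤ}
    (hy : latticeVec m d c t ∈ N) {i : ℕ} (hi : i ≤ m + 2)
    (hpi : ¬ (p : ℤ) ∣ padded (Fin.snoc c (e * t) : Fin (m + 2) → ℤ) i) :
    ∃ k : Fin (m + 2), ∃ r : ℤ, ¬ (p : ℤ) ∣ r ∧ Pi.single k ((d : ℚ) * r) ∈ N := by
  by_contra! h
  have hrow : ∀ (k : Fin (m + 2)) (r : ℤ), neighborSum (latticeVec m d c t) k = d * r →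
      (r : ZMod p) = 0 := by
    intro k r hr
    rw [ZMod.intCast_zmod_eq_zero_iff_dvd]
    by_contra hpr
    exact h k r hpr (hr ▸ single_neighborSum_mem hN hy k)
  apply hpi
  rw [← ZMod.intCast_zmod_eq_zero_iff_dvd]
  refine eq_zero_of_recurrence
    (P := fun i => ((padded (Fin.snoc c (e * t) : Fin (m + 2) → ℤ) i : ℤ) : ZMod p))
    (m := m) (by simp [padded]) (fun k hk => ?_) ?_ hi
  · simpa [neighborSum] using hrow ⟨k, by omega⟩ _ (neighborSum_latticeVec hde hk)
  · have := hrow (Fin.last _) (c (Fin.last m) + e * t)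
      (by rw [Fin.val_last, neighborSum_latticeVec_last hde]; push_cast; ring)
    simpa [padded_snoc _ _ (le_refl (m + 1)), padded_last] using this

theorem single_mem_of_single_mul_mem (hp : p.Prime)
    (hN : ∀ k, ∀ x ∈ N, craigA (m + 2) k *ᵥ x ∈ N)
    (hpN : ∀ z ∈ craigL (m + 2) d, (p : ℤ) • z ∈ N)
    {k : Fin (m + 2)} {r : ℤ} (hr : ¬ (p : ℤ) ∣ r) (hk : Pi.single k ((d : ℚ) * r) ∈ N)
    (j : Fin (m + 2)) : Pi.single j (d : ℚ) ∈ N := by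
  have hcop : IsCoprime r p :=
    ((Nat.prime_iff_prime_int.mp hp).irreducible.coprime_iff_not_dvd.mpr hr).symm
  refine Submodule.mem_of_smul_mem_of_isCoprime hcop ?_ (hpN _ (single_mem_craigL j))
  rw [← Pi.single_smul', zsmul_eq_mul, mul_comm]
  exact single_mem_of_single_mem hN hk j

theorem smul_craigV_mem (hs : ∀ j, Pi.single j (d : ℚ) ∈ N) {c : Fin (m + 1) → ℤ} {t : ℤ}
    (hy : latticeVec m d c t ∈ N) : t • craigV (m + 2) ∈ N := by
  have hv : t • craigV (m + 2)
      = latticeVec m d c t - ∑ j, c j • Pi.single j.castSucc (d : ℚ) := by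
    rw [latticeVec, add_sub_cancel_right]
  rw [hv]
  exact sub_mem hy (sum_mem fun j _ => Submodule.smul_mem _ _ (hs _))

theorem craigL_le_of_single_mem (hs : ∀ j, Pi.single j (d : ℚ) ∈ N)
    (hv : craigV (m + 2) ∈ N) : craigL (m + 2) d ≤ N := by
  intro x hx
  obtain ⟨c, t, rfl⟩ := mem_craigL_iff.1 hx
  exact add_mem (Submodule.smul_mem _ _ hv) (sum_mem fun j _ => Submodule.smul_mem _ _ (hs _))

theorem craigA_mulVec_mem_sup (hde : d * e = m + 3)
    (hL : ∀ k, ∀ x ∈ L, craigA (m + 2) k *ᵥ x ∈ L) (k : Fin (m + 2)) {x : Fin (m + 2) → ℚ}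
    (hx : x ∈ L ⊔ (p : ℤ) • craigL (m + 2) d) :
    craigA (m + 2) k *ᵥ x ∈ L ⊔ (p : ℤ) • craigL (m + 2) d := by
  obtain ⟨y, hy, w, hw, rfl⟩ := Submodule.mem_sup.1 hx
  obtain ⟨z, hz, rfl⟩ := (Submodule.mem_smul_pointwise_iff_exists _ _ _).1 hw
  rw [mulVec_add, mulVec_smul]
  exact add_mem (Submodule.mem_sup_left (hL k y hy)) (Submodule.mem_sup_right
    (Submodule.smul_mem_pointwise_smul _ _ _ (craigA_mulVec_mem_craigL hde k hz)))

theorem forall_single_mem_sup (hp : p.Prime) (hde : d * e = m + 3)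
    (hL : ∀ k, ∀ x ∈ L, craigA (m + 2) k *ᵥ x ∈ L) {c : Fin (m + 1) → ℤ} {t : ℤ}
    (hy : latticeVec m d c t ∈ L) {i : ℕ} (hi : i ≤ m + 2)
    (hpi : ¬ (p : ℤ) ∣ padded (Fin.snoc c (e * t) : Fin (m + 2) → ℤ) i) (j : Fin (m + 2)) :
    Pi.single j (d : ℚ) ∈ L ⊔ (p : ℤ) • craigL (m + 2) d := by
  have hN := craigA_mulVec_mem_sup (p := p) hde hL
  obtain ⟨k, r, hr, hk⟩ :=
    exists_single_mem_of_not_dvd hde hN (Submodule.mem_sup_left hy) hi hpi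
  exact single_mem_of_single_mul_mem hp hN
    (fun z hz => Submodule.mem_sup_right (Submodule.smul_mem_pointwise_smul _ _ _ hz)) hr hk j

theorem eq_craigL_of_forall_single_mem (hp : p.Prime) (hLd : L ≤ craigL (m + 2) d) {k : ℕ}
    (hidx : subIndex L (craigL (m + 2) d) = p ^ k)
    (hs : ∀ j, Pi.single j (d : ℚ) ∈ L ⊔ (p : ℤ) • craigL (m + 2) d)
    {c : Fin (m + 1) → ℤ} {t : ℤ} (hy : latticeVec m d c t ∈ L ⊔ (p : ℤ) • craigL (m + 2) d)
    (ht : ¬ (p : ℤ) ∣ t) : L = craigL (m + 2) d := by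
  have hpN : ∀ z ∈ craigL (m + 2) d, (p : ℤ) • z ∈ L ⊔ (p : ℤ) • craigL (m + 2) d :=
    fun z hz => Submodule.mem_sup_right (Submodule.smul_mem_pointwise_smul _ _ _ hz)
  have hcop : IsCoprime t p :=
    ((Nat.prime_iff_prime_int.mp hp).irreducible.coprime_iff_not_dvd.mpr ht).symm
  have hv := Submodule.mem_of_smul_mem_of_isCoprime hcop (smul_craigV_mem hs hy)
    (hpN _ (mem_craigL_iff.2 ⟨0, 1, by simp [latticeVec]⟩))
  refine Submodule.eq_of_le_sup_smul_of_pow_smul_mem (k := k) hLd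
    (craigL_le_of_single_mem hs hv) fun x hx => ?_
  have := AddSubgroup.nsmul_relIndex_mem L.toAddSubgroup
    (K := (craigL (m + 2) d).toAddSubgroup) hx
  rw [← subIndex, hidx] at this
  exact_mod_cast this

theorem exists_not_dvd_of_not_le_craigL_mul (hLd : L ≤ craigL (m + 2) d)
    (h : ¬ L ≤ craigL (m + 2) (p * d)) :
    ∃ c t, latticeVec m d c t ∈ L ∧ ∃ j, ¬ (p : ℤ) ∣ c j := by
  obtain ⟨y, hy, hyn⟩ := SetLike.not_le_iff_exists.1 h
  obtain ⟨c, t, rfl⟩ := mem_craigL_iff.1 (hLd hy)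
  refine ⟨c, t, hy, ?_⟩
  by_contra! hc
  choose c' hc' using hc
  obtain rfl : c = (p : ℤ) • c' := funext hc'
  exact hyn (latticeVec_natCast_smul p ▸ latticeVec_mem_craigL)

theorem exists_not_dvd_of_not_le_smul_craigL (hLd : L ≤ craigL (m + 2) (p * d))
    (h : ¬ L ≤ (p : ℚ) • craigL (m + 2) d) :
    ∃ c t, latticeVec m (p * d) c t ∈ L ∧ ¬ (p : ℤ) ∣ t := by
  obtain ⟨y, hy, hyn⟩ := SetLike.not_le_iff_exists.1 h
  obtain ⟨c, t, rfl⟩ := mem_craigL_iff.1 (hLd hy)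
  refine ⟨c, t, hy, ?_⟩
  rintro ⟨t', rfl⟩
  rw [← natCast_smul_latticeVec] at hyn
  exact hyn (Submodule.smul_mem_pointwise_smul _ _ _ latticeVec_mem_craigL)

end Sublattice

section Containment

variable {m d e p : ℕ} {L : Submodule ℤ (Fin (m + 2) → ℚ)} (hp : p.Prime)
  (hL : ∀ k, ∀ x ∈ L, craigA (m + 2) k *ᵥ x ∈ L) {k : ℕ}

include hp hL

theorem le_craigL_of_le_craigL_one (hL1 : L ≤ craigL (m + 2) 1) (hne : L ≠ craigL (m + 2) 1)
    (hidx : subIndex L (craigL (m + 2) 1) = p ^ k) : L ≤ craigL (m + 2) p := by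
  by_contra hle
  obtain ⟨c, t, hy, j, hj⟩ := exists_not_dvd_of_not_le_craigL_mul hL1 (by rwa [mul_one])
  have hs := forall_single_mem_sup (e := m + 3) hp (one_mul _) hL hy (i := j + 1) (by omega)
    (by rwa [padded_snoc _ _ (by omega), padded_succ])
  -- for `d = 1`, `hs` contains `e_{m+1} = latticeVec m 1 (-craigVInt m) 1`, of last coordinate `1`
  refine hne (eq_craigL_of_forall_single_mem hp hL1 hidx hs (t := (1 : ℕ))
    (latticeVec_neg_craigVInt ▸ hs _) ?_)
  rw [Int.natCast_dvd_natCast]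
  exact hp.not_dvd_one

theorem le_craigL_mul_or_le_smul_craigL (hde : p * d * e = m + 3)
    (hLd : L ≤ craigL (m + 2) (p * d)) (hne : L ≠ craigL (m + 2) (p * d))
    (hidx : subIndex L (craigL (m + 2) (p * d)) = p ^ k) :
    L ≤ craigL (m + 2) (p * (p * d)) ∨ L ≤ (p : ℚ) • craigL (m + 2) d := by
  by_contra! h
  obtain ⟨c, t, hy, j, hj⟩ := exists_not_dvd_of_not_le_craigL_mul hLd h.1
  obtain ⟨c', t', hy', ht'⟩ := exists_not_dvd_of_not_le_smul_craigL hLd h.2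
  have hs := forall_single_mem_sup hp hde hL hy (i := j + 1) (by omega)
    (by rwa [padded_snoc _ _ (by omega), padded_succ])
  exact hne (eq_craigL_of_forall_single_mem hp hLd hidx hs (Submodule.mem_sup_left hy') ht')

theorem le_smul_craigL (hde : p * d * e = m + 3) (he : ¬ p ∣ e)
    (hLd : L ≤ craigL (m + 2) (p * d)) (hne : L ≠ craigL (m + 2) (p * d))
    (hidx : subIndex L (craigL (m + 2) (p * d)) = p ^ k) : L ≤ (p : ℚ) • craigL (m + 2) d := by
  by_contra h
  obtain ⟨c, t, hy, ht⟩ := exists_not_dvd_of_not_le_smul_craigL hLd h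
  have hpet : ¬ (p : ℤ) ∣ e * t := by
    rw [(Nat.prime_iff_prime_int.mp hp).dvd_mul, Int.natCast_dvd_natCast]
    exact not_or.2 ⟨he, ht⟩
  have hs := forall_single_mem_sup hp hde hL hy le_rfl (by rwa [padded_last, Fin.snoc_last])
  exact hne (eq_craigL_of_forall_single_mem hp hLd hidx hs (Submodule.mem_sup_left hy) ht)

end Containment

end CraigLattice

open CraigLattice

/-- Lemma 3: a proper `ℤG`-sublattice `L` of `L(p^i)` of finite
`p`-power index is contained in `L(p)` (if `i = 0`), in `L(p^{i+1})` or
`p·L(p^{i-1})` (if `0 < i < v_p(n+1)`), and in `p·L(p^{v_p(n+1)-1})`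
(if `i = v_p(n+1)`). -/
theorem proper_sublattice_containment (n : ℕ) (hn : 2 ≤ n)
    (ρ : Equiv.Perm (Fin (n + 1)) →* Matrix (Fin n) (Fin n) ℚ)
    (hρ : ∀ k : Fin n, ρ (Equiv.swap k.castSucc k.succ) = craigA n k)
    (p : ℕ) (hp : p.Prime) (hpd : p ∣ n + 1)
    (i : ℕ) (hi : i ≤ padicValNat p (n + 1))
    (L : Submodule ℤ (Fin n → ℚ)) (hL : IsSubl ρ (craigL n (p ^ i)) L)
    (hprop : L ≠ craigL n (p ^ i))
    (hidx : ∃ m : ℕ, subIndex L (craigL n (p ^ i)) = p ^ m) :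
    (i = 0 → L ≤ craigL n p) ∧
    (0 < i → i < padicValNat p (n + 1) →
      L ≤ craigL n (p ^ (i + 1)) ∨ L ≤ (p : ℚ) • craigL n (p ^ (i - 1))) ∧
    (i = padicValNat p (n + 1) →
      L ≤ (p : ℚ) • craigL n (p ^ (padicValNat p (n + 1) - 1))) := by
  have := Fact.mk hp
  obtain ⟨m, rfl⟩ : ∃ m, n = m + 2 := ⟨n - 2, by omega⟩
  have hLinv : ∀ k, ∀ x ∈ L, craigA (m + 2) k *ᵥ x ∈ L := fun k x hx => hρ k ▸ hL.2 _ x hx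
  obtain ⟨k, hk⟩ := hidx
  obtain ⟨e, he⟩ : p ^ i ∣ m + 3 := (pow_dvd_pow p hi).trans pow_padicValNat_dvd
  refine ⟨fun hi0 => ?_, fun hi0 hiv => ?_, fun hiv => ?_⟩
  · subst hi0
    rw [pow_zero] at hL hprop hk
    exact le_craigL_of_le_craigL_one hp hLinv hL.1 hprop hk
  · obtain ⟨j, rfl⟩ : ∃ j, i = j + 1 := ⟨i - 1, by omega⟩
    rw [pow_succ'] at hL hprop hk he
    simpa [pow_succ'] using le_craigL_mul_or_le_smul_craigL hp hLinv he.symm hL.1 hprop hk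
  · obtain ⟨j, rfl⟩ : ∃ j, i = j + 1 :=
      ⟨i - 1, by have := one_le_padicValNat_of_dvd (by omega) hpd; omega⟩
    have hpe : ¬ p ∣ e := fun ⟨e', he'⟩ => pow_succ_padicValNat_not_dvd (p := p) (n := m + 3)
      (by omega) ⟨e', by rw [← hiv, he, he', pow_succ]; ring⟩
    rw [pow_succ'] at hL hprop hk he
    simpa [← hiv] using le_smul_craigL hp hLinv he.symm hpe hL.1 hprop hk
end
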